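/- arXiv:2405.05357 — 5 statements merged into one kernel-verified Lean document; each statement's English description precedes it below -/
import Mathlib

section
/- For every integer n ≥ 1, the number of flattened Catalan words of length n equals (3^(n-1) + 1)/2. -/
/-- `w : ℕ → ℕ` encodes a Catalan word of length `n` (0-indexed letters
`w 0, w 1, …, w (n-1)`): the first letter is `0`, each letter is at most the
previous one plus one, and `w` is normalized to vanish at positions `≥ n`. -/
def IsCatalanWord (n : ℕ) (w : ℕ → ℕ) : Prop :=
  w 0 = 0 ∧ (∀ i, i + 1 < n → w (i + 1) ≤ w i + 1) ∧ ∀ i, n ≤ i → w i = 0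

/-- `j` is the starting position of one of the maximal weakly increasing
contiguous subwords (runs of weak ascents) of the length-`n` word `w`. -/
def IsRunStart (n : ℕ) (w : ℕ → ℕ) (j : ℕ) : Prop :=
  j < n ∧ (j = 0 ∨ w j < w (j - 1))

/-- A word is flattened when the leading terms of its maximal weakly increasing
contiguous subwords, read from left to right, form a weakly increasing sequence. -/
def IsFlattened (n : ℕ) (w : ℕ → ℕ) : Prop :=
  ∀ i j, IsRunStart n w i → IsRunStart n w j → i ≤ j → w i ≤ w j

/-- The set of flattened Catalan words of length `n`. -/
def FlatCat (n : ℕ) : Set (ℕ → ℕ) := {w | IsCatalanWord n w ∧ IsFlattened n w}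

/-- Number of maximal strictly increasing contiguous subwords (runs of ascents):
`1 + #{ i : w_i ≥ w_{i+1} }`. -/
noncomputable def runsAsc (n : ℕ) (w : ℕ → ℕ) : ℕ :=
  1 + {i : ℕ | i + 1 < n ∧ w (i + 1) ≤ w i}.ncard

/-- Number of maximal weakly increasing contiguous subwords (runs of weak
ascents): `1 + #{ i : w_i > w_{i+1} }`. -/
noncomputable def wruns (n : ℕ) (w : ℕ → ℕ) : ℕ :=
  1 + {i : ℕ | i + 1 < n ∧ w (i + 1) < w i}.ncard

/-- Number of maximal strictly decreasing contiguous subwords (runs of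
descents): `1 + #{ i : w_i ≤ w_{i+1} }`. -/
noncomputable def runsDesc (n : ℕ) (w : ℕ → ℕ) : ℕ :=
  1 + {i : ℕ | i + 1 < n ∧ w i ≤ w (i + 1)}.ncard

/-- Number of maximal weakly decreasing contiguous subwords (runs of weak
descents): `1 + #{ i : w_i < w_{i+1} }`. -/
noncomputable def wrunsDesc (n : ℕ) (w : ℕ → ℕ) : ℕ :=
  1 + {i : ℕ | i + 1 < n ∧ w i < w (i + 1)}.ncard

/-- An `ℓ`-valley `a b^ℓ (b+1)` (with `a > b`) occurring at position `i` of the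
length-`n` word `w`. -/
def IsLValley (n : ℕ) (w : ℕ → ℕ) (ℓ i : ℕ) : Prop :=
  i + ℓ + 1 < n ∧ w (i + 1) < w i ∧ (∀ t, 1 ≤ t → t ≤ ℓ → w (i + t) = w (i + 1)) ∧
    w (i + ℓ + 1) = w (i + 1) + 1

/-- Number of `ℓ`-valleys of `w`. -/
noncomputable def lValleyCount (n : ℕ) (w : ℕ → ℕ) (ℓ : ℕ) : ℕ :=
  {i : ℕ | IsLValley n w ℓ i}.ncard

/-- Number of valleys of `w` (all `ℓ`-valleys, `ℓ ≥ 1`). -/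
noncomputable def valleyCount (n : ℕ) (w : ℕ → ℕ) : ℕ :=
  {p : ℕ × ℕ | 1 ≤ p.2 ∧ IsLValley n w p.2 p.1}.ncard

/-- A symmetric valley `a (a-1)^ℓ a` (with `ℓ ≥ 1`) occurring at position `i`. -/
def IsSymValley (n : ℕ) (w : ℕ → ℕ) (ℓ i : ℕ) : Prop :=
  i + ℓ + 1 < n ∧ w i = w (i + 1) + 1 ∧ (∀ t, 1 ≤ t → t ≤ ℓ → w (i + t) = w (i + 1)) ∧
    w (i + ℓ + 1) = w i

/-- Number of symmetric valleys of `w` (over all `ℓ ≥ 1`). -/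
noncomputable def symValleyCount (n : ℕ) (w : ℕ → ℕ) : ℕ :=
  {p : ℕ × ℕ | 1 ≤ p.2 ∧ IsSymValley n w p.2 p.1}.ncard

/-- An `ℓ`-peak `a (a+1)^ℓ b` (with `a ≥ b`) occurring at position `i` of the
length-`n` word `w`. -/
def IsLPeak (n : ℕ) (w : ℕ → ℕ) (ℓ i : ℕ) : Prop :=
  i + ℓ + 1 < n ∧ (∀ t, 1 ≤ t → t ≤ ℓ → w (i + t) = w i + 1) ∧ w (i + ℓ + 1) ≤ w i

/-- Number of `ℓ`-peaks of `w`. -/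
noncomputable def lPeakCount (n : ℕ) (w : ℕ → ℕ) (ℓ : ℕ) : ℕ :=
  {i : ℕ | IsLPeak n w ℓ i}.ncard

/-- Number of peaks of `w` (all `ℓ`-peaks, `ℓ ≥ 1`). -/
noncomputable def peakCount (n : ℕ) (w : ℕ → ℕ) : ℕ :=
  {p : ℕ × ℕ | 1 ≤ p.2 ∧ IsLPeak n w p.2 p.1}.ncard

/-- A symmetric peak `a (a+1)^ℓ a` (with `ℓ ≥ 1`) occurring at position `i`. -/
def IsSymPeak (n : ℕ) (w : ℕ → ℕ) (ℓ i : ℕ) : Prop :=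
  i + ℓ + 1 < n ∧ (∀ t, 1 ≤ t → t ≤ ℓ → w (i + t) = w i + 1) ∧ w (i + ℓ + 1) = w i

/-- Number of symmetric peaks of `w` (over all `ℓ ≥ 1`). -/
noncomputable def symPeakCount (n : ℕ) (w : ℕ → ℕ) : ℕ :=
  {p : ℕ × ℕ | 1 ≤ p.2 ∧ IsSymPeak n w p.2 p.1}.ncard

/-!
Let `runHead w i` be the leading term of the run of weak ascents containing position `i`.
A word is flattened exactly when every descent `w (i+1) < w i` lands at or above
`runHead w i`. Hence a flattened Catalan word ending in `x` with run head `m` extends by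
exactly the letters `m, …, x + 1`, and the gap `x - m` of the extension is `0` for the
`x - m` letters below `x`, is unchanged for `x`, and grows by one for `x + 1`. If `a k` counts
the words of length `k + 1` and `s k` is the total of their gaps, then
`a (k+1) = 2 a k + s k` and `s (k+1) = a k + 2 s k`, so `a k - s k = 1` and
`a (k+1) = 3 a k - 1`.
-/

open Finset Function

def runHead (w : ℕ → ℕ) : ℕ → ℕ
  | 0 => w 0
  | i + 1 => if w (i + 1) < w i then w (i + 1) else runHead w i

lemma runHead_le (w : ℕ → ℕ) : ∀ i, runHead w i ≤ w i
  | 0 => le_rfl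
  | i + 1 => by
    unfold runHead
    split
    · exact le_rfl
    · exact (runHead_le w i).trans (by omega)

lemma runHead_congr {w w' : ℕ → ℕ} :
    ∀ i, (∀ j ≤ i, w j = w' j) → runHead w i = runHead w' i
  | 0, h => h 0 le_rfl
  | i + 1, h => by
    simp only [runHead, h (i + 1) le_rfl, h i (by omega),
      runHead_congr i fun j hj => h j (by omega)]

lemma runHead_of_isRunStart {n : ℕ} {w : ℕ → ℕ} {j : ℕ} (h : IsRunStart n w j) :
    runHead w j = w j := by
  cases j with
  | zero => rfl
  | succ i =>
    have hd : w (i + 1) < w i := h.2.resolve_left i.succ_ne_zero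
    simp [runHead, hd]

lemma exists_isRunStart_eq_runHead {n : ℕ} (w : ℕ → ℕ) :
    ∀ i < n, ∃ j ≤ i, IsRunStart n w j ∧ w j = runHead w i
  | 0, h => ⟨0, le_rfl, ⟨h, Or.inl rfl⟩, rfl⟩
  | i + 1, h => by
    by_cases hd : w (i + 1) < w i
    · exact ⟨i + 1, le_rfl, ⟨h, Or.inr (by simpa using hd)⟩, by simp [runHead, hd]⟩
    · obtain ⟨j, hj, hrs, he⟩ := exists_isRunStart_eq_runHead (n := n) w i (by omega)
      exact ⟨j, by omega, hrs, by simp [runHead, hd, he]⟩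

lemma le_runHead_of_isRunStart {n : ℕ} {w : ℕ → ℕ}
    (hdesc : ∀ i, i + 1 < n → w (i + 1) < w i → runHead w i ≤ w (i + 1))
    {j : ℕ} (hj : IsRunStart n w j) : ∀ k, j ≤ k → k < n → w j ≤ runHead w k
  | k, hjk, hk => by
    rcases hjk.eq_or_lt with rfl | hlt
    · exact (runHead_of_isRunStart hj).ge
    · obtain ⟨k, rfl⟩ : ∃ i, k = i + 1 := ⟨k - 1, by omega⟩
      have ih := le_runHead_of_isRunStart hdesc hj k (by omega) (by omega)
      unfold runHead
      split
      · next hd => exact ih.trans (hdesc k hk hd)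
      · exact ih

theorem isFlattened_iff {n : ℕ} {w : ℕ → ℕ} :
    IsFlattened n w ↔ ∀ i, i + 1 < n → w (i + 1) < w i → runHead w i ≤ w (i + 1) := by
  constructor
  · intro hflat i hi hd
    obtain ⟨j, hj, hrs, he⟩ := exists_isRunStart_eq_runHead (n := n) w i (by omega)
    exact he ▸ hflat j (i + 1) hrs ⟨hi, Or.inr (by simpa using hd)⟩ (by omega)
  · intro hdesc i j hi hj hij
    exact (le_runHead_of_isRunStart hdesc hi j hij hj.1).trans_eq (runHead_of_isRunStart hj)

section Extension

variable {k : ℕ} {w : ℕ → ℕ} {c : ℕ}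

lemma runHead_update_of_le {i : ℕ} (hi : i ≤ k) : runHead (update w (k + 1) c) i = runHead w i :=
  runHead_congr i fun j hj => update_of_ne (by omega) c w

lemma runHead_update_succ :
    runHead (update w (k + 1) c) (k + 1) = if c < w k then c else runHead w k := by
  simp [runHead, runHead_update_of_le le_rfl]

lemma isCatalanWord_update_succ_iff (hw : IsCatalanWord (k + 1) w) :
    IsCatalanWord (k + 2) (update w (k + 1) c) ↔ c ≤ w k + 1 := by
  obtain ⟨h0, hstep, hzero⟩ := hw
  constructor
  · rintro ⟨-, hstep', -⟩
    simpa [update_of_ne (Nat.succ_ne_self k).symm] using hstep' k (by omega)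
  · intro hc
    refine ⟨by simpa [update_apply] using h0, fun i hi => ?_, fun i hi => ?_⟩
    · obtain rfl | hi : i = k ∨ i < k := by omega
      · simpa [update_of_ne (Nat.succ_ne_self i).symm] using hc
      · simpa [update_of_ne (show i + 1 ≠ k + 1 by omega), update_of_ne (show i ≠ k + 1 by omega)]
          using hstep i (by omega)
    · simpa [update_of_ne (show i ≠ k + 1 by omega)] using hzero i (by omega)

lemma isFlattened_update_succ_iff (hw : IsFlattened (k + 1) w) :
    IsFlattened (k + 2) (update w (k + 1) c) ↔ (c < w k → runHead w k ≤ c) := by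
  rw [isFlattened_iff] at hw ⊢
  constructor
  · intro h hc
    have h' := h k (by omega)
    simp only [update_self, update_of_ne (Nat.succ_ne_self k).symm,
      runHead_update_of_le le_rfl] at h'
    exact h' hc
  · intro hc i hi
    obtain rfl | hi : i = k ∨ i < k := by omega
    · simpa [update_of_ne (Nat.succ_ne_self i).symm, runHead_update_of_le le_rfl] using hc
    · simpa [update_of_ne (show i + 1 ≠ k + 1 by omega), update_of_ne (show i ≠ k + 1 by omega),
        runHead_update_of_le (show i ≤ k by omega)] using hw i (by omega)

lemma update_mem_flatCat_succ_iff (hw : w ∈ FlatCat (k + 1)) :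
    update w (k + 1) c ∈ FlatCat (k + 2) ↔ c ∈ Icc (runHead w k) (w k + 1) := by
  have := runHead_le w k
  rw [FlatCat, Set.mem_ofPred_eq, isCatalanWord_update_succ_iff hw.1,
    isFlattened_update_succ_iff hw.2, mem_Icc]
  omega

lemma update_zero_mem_flatCat (hw : w ∈ FlatCat (k + 2)) : update w (k + 1) 0 ∈ FlatCat (k + 1) := by
  obtain ⟨⟨h0, hstep, hzero⟩, hflat⟩ := hw
  rw [isFlattened_iff] at hflat
  refine ⟨⟨by simpa [update_apply] using h0, fun i hi => ?_, fun i hi => ?_⟩, ?_⟩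
  · simpa [update_of_ne (show i + 1 ≠ k + 1 by omega), update_of_ne (show i ≠ k + 1 by omega)]
      using hstep i (by omega)
  · rcases hi.eq_or_lt with rfl | hi
    · simp
    · simpa [update_of_ne (show i ≠ k + 1 by omega)] using hzero i (by omega)
  · rw [isFlattened_iff]
    intro i hi
    simpa [update_of_ne (show i + 1 ≠ k + 1 by omega), update_of_ne (show i ≠ k + 1 by omega),
      runHead_update_of_le (show i ≤ k by omega)] using hflat i (by omega)

end Extension

open scoped Classical in
noncomputable def flatWords : ℕ → Finset (ℕ → ℕ)
  | 0 => {0}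
  | k + 1 => (flatWords k).biUnion fun w => (Icc (runHead w k) (w k + 1)).image (update w (k + 1))

lemma flatCat_one : FlatCat 1 = {0} := by
  ext w
  constructor
  · rintro ⟨⟨h0, -, hzero⟩, -⟩
    funext i
    cases i with
    | zero => exact h0
    | succ i => exact hzero (i + 1) (by omega)
  · rintro rfl
    exact ⟨⟨rfl, fun _ _ => zero_le_one, fun _ _ => rfl⟩, fun _ _ _ _ _ => le_rfl⟩

lemma coe_flatWords : ∀ k, (flatWords k : Set (ℕ → ℕ)) = FlatCat (k + 1)
  | 0 => by simp [flatWords, flatCat_one]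
  | k + 1 => by
    ext w'
    simp only [flatWords, coe_biUnion, coe_image, Set.mem_iUnion, Set.mem_image, mem_coe,
      coe_flatWords k]
    constructor
    · rintro ⟨w, hw, c, hc, rfl⟩
      exact (update_mem_flatCat_succ_iff hw).2 hc
    · intro hw'
      have htrunc := update_zero_mem_flatCat hw'
      refine ⟨_, htrunc, w' (k + 1), ?_, by simp⟩
      exact (update_mem_flatCat_succ_iff htrunc).1 (by simpa using hw')

open scoped Classical in
lemma sum_flatWords_succ {M : Type*} [AddCommMonoid M] (k : ℕ) (f : (ℕ → ℕ) → M) :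
    ∑ w ∈ flatWords (k + 1), f w =
      ∑ w ∈ flatWords k, ∑ c ∈ Icc (runHead w k) (w k + 1), f (update w (k + 1) c) := by
  have hvanish : ∀ w ∈ flatWords k, w (k + 1) = 0 := fun w hw =>
    ((coe_flatWords k).subset hw).1.2.2 (k + 1) le_rfl
  rw [flatWords, sum_biUnion]
  · exact sum_congr rfl fun w _ => sum_image fun c _ c' _ h => update_injective w (k + 1) h
  · intro w₁ hw₁ w₂ hw₂ hne
    refine disjoint_left.2 fun w' h₁ h₂ => hne ?_
    obtain ⟨c₁, -, rfl⟩ := mem_image.1 h₁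
    obtain ⟨c₂, -, h⟩ := mem_image.1 h₂
    have h₀ := congrArg (update · (k + 1) 0) h
    simp only [update_idem] at h₀
    rwa [update_eq_self_iff.2 (hvanish w₂ hw₂).symm,
      update_eq_self_iff.2 (hvanish w₁ hw₁).symm, eq_comm] at h₀

lemma sum_Icc_ite_lt {m x : ℕ} (h : m ≤ x) :
    ∑ c ∈ Icc m (x + 1), (if c < x then 0 else c - m) = 2 * (x - m) + 1 := by
  rw [sum_Icc_succ_top (by omega), ← Ico_add_one_right_eq_Icc, sum_Ico_succ_top h,
    sum_eq_zero fun c hc => if_pos (mem_Ico.1 hc).2]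
  simp only [lt_irrefl, if_false, not_lt.2 (Nat.le_succ x)]
  omega

lemma card_flatWords_succ (k : ℕ) :
    #(flatWords (k + 1)) = ∑ w ∈ flatWords k, (w k - runHead w k) + 2 * #(flatWords k) := by
  rw [card_eq_sum_ones, sum_flatWords_succ, card_eq_sum_ones, mul_sum, ← sum_add_distrib]
  refine sum_congr rfl fun w _ => ?_
  have := runHead_le w k
  rw [← card_eq_sum_ones, Nat.card_Icc]
  omega

lemma sum_gap_flatWords_succ (k : ℕ) :
    ∑ w ∈ flatWords (k + 1), (w (k + 1) - runHead w (k + 1)) =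
      2 * ∑ w ∈ flatWords k, (w k - runHead w k) + #(flatWords k) := by
  rw [sum_flatWords_succ, card_eq_sum_ones, mul_sum, ← sum_add_distrib]
  refine sum_congr rfl fun w _ => ?_
  simp only [update_self, runHead_update_succ]
  rw [← sum_Icc_ite_lt (runHead_le w k)]
  refine sum_congr rfl fun c _ => ?_
  split_ifs <;> omega

lemma card_flatWords_eq_sum_gap_add_one :
    ∀ k, #(flatWords k) = ∑ w ∈ flatWords k, (w k - runHead w k) + 1
  | 0 => by simp [flatWords, runHead]
  | k + 1 => by
    have := card_flatWords_eq_sum_gap_add_one k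
    rw [card_flatWords_succ, sum_gap_flatWords_succ]
    omega

lemma two_mul_card_flatWords : ∀ k, 2 * #(flatWords k) = 3 ^ k + 1
  | 0 => by simp [flatWords]
  | k + 1 => by
    have := two_mul_card_flatWords k
    have := card_flatWords_eq_sum_gap_add_one k
    rw [card_flatWords_succ, pow_succ]
    omega

/-- For every integer `n ≥ 1`, the number of flattened Catalan words of length
`n` equals `(3^(n-1) + 1)/2`. -/
theorem flatCat_card (n : ℕ) (hn : 1 ≤ n) :
    ((FlatCat n).ncard : ℚ) = (3 ^ (n - 1) + 1) / 2 := by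
  obtain ⟨k, rfl⟩ : ∃ k, n = k + 1 := ⟨n - 1, by omega⟩
  rw [← coe_flatWords, Set.ncard_coe_finset, Nat.add_sub_cancel, eq_div_iff two_ne_zero]
  exact_mod_cast (mul_comm _ _).trans (two_mul_card_flatWords k)
end

section
/- For every integer n ≥ 1, the number of flattened Catalan words of length n equals the number of (n-1)-tuples (a_1, …, a_{n-1}) with each a_i ∈ {0, 1, 2} and with a_1 + ⋯ + a_{n-1} even. -/
namespace FCAux

attribute [local instance 10] Classical.propDecidable

/-- truncation to length `n` -/
def trunc (n : ℕ) (w : ℕ → ℕ) : ℕ → ℕ := fun i => if i < n then w i else 0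

/-- extend a length-`n` word by a letter `x` at position `n` -/
def ext (n : ℕ) (w : ℕ → ℕ) (x : ℕ) : ℕ → ℕ :=
  fun i => if i < n then w i else if i = n then x else 0

/-- last run start of the length-`n` word `w` -/
noncomputable def rho (n : ℕ) (w : ℕ → ℕ) : ℕ :=
  Nat.findGreatest (fun j => j = 0 ∨ w j < w (j - 1)) (n - 1)

variable {n : ℕ} {w w' : ℕ → ℕ}

lemma ext_apply_lt {x i : ℕ} (h : i < n) : ext n w x i = w i := if_pos h
lemma ext_apply_n (x : ℕ) : ext n w x n = x := by simp [ext]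

lemma rho_le (hn : 1 ≤ n) : rho n w ≤ n - 1 := Nat.findGreatest_le _

lemma rho_runStart (hn : 1 ≤ n) : IsRunStart n w (rho n w) := by
  constructor
  · have := rho_le (w := w) hn
    omega
  · exact Nat.findGreatest_spec (P := fun j => j = 0 ∨ w j < w (j - 1))
      (Nat.zero_le _) (Or.inl rfl)

lemma runStart_le_rho {j : ℕ} (h : IsRunStart n w j) : j ≤ rho n w :=
  Nat.le_findGreatest (by have := h.1; omega) h.2

lemma no_descent_after_rho {j : ℕ} (h1 : rho n w < j) (h2 : j ≤ n - 1) :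
    w (j - 1) ≤ w j := by
  have h := Nat.findGreatest_is_greatest
    (P := fun j => j = 0 ∨ w j < w (j - 1)) (n := n - 1) (k := j) h1 h2
  by_contra hc
  exact h (Or.inr (by omega))

lemma tau_le_of_ge {i : ℕ} (hi : rho n w ≤ i) (hi2 : i ≤ n - 1) :
    w (rho n w) ≤ w i := by
  induction i with
  | zero =>
    have h0 : rho n w = 0 := by omega
    rw [h0]
  | succ i ih =>
    rcases Nat.lt_or_ge (rho n w) (i + 1) with h | h
    · have hd := no_descent_after_rho h hi2
      have h2 := ih (by omega) (by omega)
      simp only [Nat.add_sub_cancel] at hd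
      exact le_trans h2 hd
    · have h0 : rho n w = i + 1 := by omega
      rw [h0]

lemma tau_le_last (hn : 1 ≤ n) : w (rho n w) ≤ w (n - 1) :=
  tau_le_of_ge (rho_le hn) le_rfl

lemma isRunStart_ext_iff (hx : 0 < n) {x j : ℕ} (hj : j < n) :
    IsRunStart (n + 1) (ext n w x) j ↔ IsRunStart n w j := by
  have e1 : ext n w x j = w j := ext_apply_lt hj
  have e2 : ext n w x (j - 1) = w (j - 1) := ext_apply_lt (by omega)
  unfold IsRunStart
  rw [e1, e2]
  constructor
  · rintro ⟨-, h⟩; exact ⟨hj, h⟩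
  · rintro ⟨-, h⟩; exact ⟨by omega, h⟩

lemma isRunStart_ext_top (hn : 1 ≤ n) {x : ℕ} :
    IsRunStart (n + 1) (ext n w x) n ↔ x < w (n - 1) := by
  have e1 : ext n w x n = x := ext_apply_n x
  have e2 : ext n w x (n - 1) = w (n - 1) := ext_apply_lt (by omega)
  unfold IsRunStart
  rw [e1, e2]
  constructor
  · rintro ⟨-, h | h⟩
    · omega
    · exact h
  · intro h; exact ⟨by omega, Or.inr h⟩

lemma ext_mem (hn : 1 ≤ n) (hw : w ∈ FlatCat n) {x : ℕ}
    (hx1 : w (rho n w) ≤ x) (hx2 : x ≤ w (n - 1) + 1) :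
    ext n w x ∈ FlatCat (n + 1) := by
  obtain ⟨⟨h0, hchain, hvan⟩, hflat⟩ := hw
  refine ⟨⟨?_, ?_, ?_⟩, ?_⟩
  · rw [ext_apply_lt (by omega)]; exact h0
  · intro i hi
    rcases Nat.lt_or_ge (i + 1) n with h | h
    · rw [ext_apply_lt h, ext_apply_lt (by omega)]
      exact hchain i h
    · have hi1 : i + 1 = n := by omega
      rw [hi1, ext_apply_n, ext_apply_lt (show i < n by omega)]
      have hi2 : i = n - 1 := by omega
      rw [hi2]
      exact hx2
  · intro i hi
    simp only [ext]
    rw [if_neg (by omega), if_neg (by omega)]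
  · intro i j hi hj hij
    have hjn1 : j < n + 1 := hj.1
    rcases Nat.lt_or_ge j n with hjn | hjn
    · have hin : i < n := by omega
      rw [ext_apply_lt hin, ext_apply_lt hjn]
      exact hflat i j ((isRunStart_ext_iff (by omega) hin).mp hi)
        ((isRunStart_ext_iff (by omega) hjn).mp hj) hij
    · have hj' : j = n := by omega
      rcases Nat.lt_or_ge i n with hin | hin
      · rw [hj', ext_apply_n, ext_apply_lt hin]
        have hri : IsRunStart n w i := (isRunStart_ext_iff (by omega) hin).mp hi
        have := hflat i (rho n w) hri (rho_runStart hn) (runStart_le_rho hri)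
        omega
      · have hi' : i = n := by omega
        rw [hi', hj', ext_apply_n]

lemma trunc_apply_lt {i : ℕ} (h : i < n) : trunc n w i = w i := if_pos h

lemma isRunStart_trunc_iff {j : ℕ} (hj : j < n) :
    IsRunStart n (trunc n w') j ↔ IsRunStart (n + 1) w' j := by
  have e1 : trunc n w' j = w' j := trunc_apply_lt hj
  have e2 : trunc n w' (j - 1) = w' (j - 1) := trunc_apply_lt (by omega)
  unfold IsRunStart
  rw [e1, e2]
  constructor
  · rintro ⟨-, h⟩; exact ⟨by omega, h⟩
  · rintro ⟨-, h⟩; exact ⟨hj, h⟩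

lemma trunc_mem (hn : 1 ≤ n) (hw' : w' ∈ FlatCat (n + 1)) : trunc n w' ∈ FlatCat n := by
  obtain ⟨⟨h0, hchain, hvan⟩, hflat⟩ := hw'
  refine ⟨⟨?_, ?_, ?_⟩, ?_⟩
  · rw [trunc_apply_lt (by omega)]; exact h0
  · intro i hi
    rw [trunc_apply_lt hi, trunc_apply_lt (by omega)]
    exact hchain i (by omega)
  · intro i hi
    simp only [trunc]
    rw [if_neg (by omega)]
  · intro i j hi hj hij
    have hjn : j < n := hj.1
    have hin : i < n := by omega
    rw [trunc_apply_lt hin, trunc_apply_lt hjn]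
    exact hflat i j ((isRunStart_trunc_iff hin).mp hi)
      ((isRunStart_trunc_iff hjn).mp hj) hij

lemma ext_trunc (hw' : w' ∈ FlatCat (n + 1)) : ext n (trunc n w') (w' n) = w' := by
  funext i
  rcases Nat.lt_or_ge i n with h | h
  · rw [ext_apply_lt h, trunc_apply_lt h]
  · rcases Nat.eq_or_lt_of_le h with h' | h'
    · subst h'; rw [ext_apply_n]
    · simp only [ext]
      rw [if_neg (by omega), if_neg (by omega), (hw'.1.2.2 i (by omega)).symm]

lemma xn_bounds (hn : 1 ≤ n) (hw' : w' ∈ FlatCat (n + 1)) :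
    trunc n w' (rho n (trunc n w')) ≤ w' n ∧ w' n ≤ trunc n w' (n - 1) + 1 := by
  set u := trunc n w' with hu
  have hr1 : rho n u < n := (rho_runStart (w := u) hn).1
  have e1 : u (n - 1) = w' (n - 1) := trunc_apply_lt (by omega)
  constructor
  · rcases Nat.lt_or_ge (w' n) (w' (n - 1)) with h | h
    · -- n is a run start of w'
      have hrs : IsRunStart (n + 1) w' n := by
        refine ⟨by omega, Or.inr ?_⟩
        have : n - 1 = n - 1 := rfl
        omega
      have hrr : IsRunStart (n + 1) w' (rho n u) :=
        (isRunStart_trunc_iff hr1).mp (rho_runStart hn)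
      have := hw'.2 (rho n u) n hrr hrs (by omega)
      rw [← trunc_apply_lt (w := w') hr1] at this
      exact this
    · calc u (rho n u) ≤ u (n - 1) := tau_le_of_ge (rho_le hn) le_rfl
        _ = w' (n - 1) := e1
        _ ≤ w' n := h
  · have := hw'.1.2.1 (n - 1) (by omega)
    rw [e1]
    have hn1 : n - 1 + 1 = n := by omega
    rw [hn1] at this
    exact this

lemma rho_eq_n_sub (n : ℕ) (w : ℕ → ℕ) :
    rho (n + 1) w = Nat.findGreatest (fun j => j = 0 ∨ w j < w (j - 1)) n := by
  simp [rho]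

lemma rho_ext_high (hn : 1 ≤ n) {x : ℕ} (hx : w (n - 1) ≤ x) :
    rho (n + 1) (ext n w x) = rho n w := by
  apply le_antisymm
  · have h1 := rho_runStart (n := n + 1) (w := ext n w x) (by omega)
    have h2 := rho_le (n := n + 1) (w := ext n w x) (by omega)
    have hne : rho (n + 1) (ext n w x) ≠ n := by
      intro he
      have := ((isRunStart_ext_top hn).mp (he ▸ h1))
      omega
    have hlt : rho (n + 1) (ext n w x) < n := by omega
    exact runStart_le_rho ((isRunStart_ext_iff (by omega) hlt).mp h1)
  · have h1 := rho_runStart (n := n) (w := w) hn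
    have h2 : IsRunStart (n + 1) (ext n w x) (rho n w) :=
      (isRunStart_ext_iff (by omega) h1.1).mpr h1
    have h3 : rho n w < n := h1.1
    rw [rho_eq_n_sub]
    exact Nat.le_findGreatest (by omega) h2.2

lemma rho_ext_low (hn : 1 ≤ n) {x : ℕ} (hx : x < w (n - 1)) :
    rho (n + 1) (ext n w x) = n := by
  apply le_antisymm
  · have := rho_le (n := n + 1) (w := ext n w x) (by omega)
    omega
  · have h2 : IsRunStart (n + 1) (ext n w x) n := (isRunStart_ext_top hn).mpr hx
    rw [rho_eq_n_sub]
    exact Nat.le_findGreatest le_rfl h2.2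

lemma flatCat_finite (n : ℕ) : (FlatCat n).Finite := by
  have hsub : FlatCat n ⊆ Set.range
      (fun (a : Fin n → Fin (n + 1)) => (fun i => if h : i < n then (a ⟨i, h⟩ : ℕ) else 0)) := by
    intro w hw
    obtain ⟨⟨h0, hchain, hvan⟩, -⟩ := hw
    have hb : ∀ i, i < n → w i ≤ i := by
      intro i
      induction i with
      | zero => intro _; omega
      | succ i ih =>
        intro h
        have := hchain i h
        have := ih (by omega)
        omega
    refine ⟨fun i => ⟨w i, by have := hb i i.2; omega⟩, ?_⟩
    funext i
    rcases Nat.lt_or_ge i n with h | h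
    · simp [h]
    · simp [show ¬ i < n by omega, (hvan i h).symm]
  exact (Set.finite_range _).subset hsub

noncomputable def FS (n : ℕ) : Finset (ℕ → ℕ) := (flatCat_finite n).toFinset

lemma mem_FS : w ∈ FS n ↔ w ∈ FlatCat n := Set.Finite.mem_toFinset _

lemma ext_inj (n : ℕ) (w : ℕ → ℕ) : Function.Injective (ext n w) := by
  intro x y h
  have := congrFun h n
  simpa [ext_apply_n] using this

lemma trunc_ext (hw : w ∈ FlatCat n) (x : ℕ) : trunc n (ext n w x) = w := by
  funext i
  rcases Nat.lt_or_ge i n with h | h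
  · rw [trunc_apply_lt h, ext_apply_lt h]
  · simp only [trunc]
    rw [if_neg (by omega), (hw.1.2.2 i h).symm]

lemma fiber_eq (hn : 1 ≤ n) (hw : w ∈ FlatCat n) :
    (FS (n + 1)).filter (fun w' => trunc n w' = w)
      = (Finset.Icc (w (rho n w)) (w (n - 1) + 1)).image (ext n w) := by
  ext v
  simp only [Finset.mem_filter, Finset.mem_image, Finset.mem_Icc, mem_FS]
  constructor
  · rintro ⟨hv, htr⟩
    refine ⟨v n, ?_, ?_⟩
    · have := xn_bounds hn hv
      rw [htr] at this
      omega
    · rw [← htr]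
      exact ext_trunc hv
  · rintro ⟨x, hx, rfl⟩
    exact ⟨ext_mem hn hw hx.1 hx.2, trunc_ext hw x⟩

lemma card_succ (hn : 1 ≤ n) :
    (FS (n + 1)).card = ∑ w ∈ FS n, (w (n - 1) + 2 - w (rho n w)) := by
  rw [Finset.card_eq_sum_card_fiberwise (f := trunc n) (t := FS n)
    (fun w' hw' => mem_FS.mpr (trunc_mem hn (mem_FS.mp hw')))]
  refine Finset.sum_congr rfl (fun w hw => ?_)
  rw [fiber_eq hn (mem_FS.mp hw), Finset.card_image_of_injective _ (ext_inj n w),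
    Nat.card_Icc]

lemma fiber_sum (hn : 1 ≤ n) (hw : w ∈ FlatCat n) :
    ∑ x ∈ Finset.Icc (w (rho n w)) (w (n - 1) + 1),
        (ext n w x n - ext n w x (rho (n + 1) (ext n w x)))
      = 2 * (w (n - 1) - w (rho n w)) + 1 := by
  set τ := w (rho n w) with hτ
  set L := w (n - 1) with hL
  have hτL : τ ≤ L := tau_le_last hn
  have hrl : rho n w < n := (rho_runStart hn).1
  have hdec : Finset.Icc τ (L + 1) = insert (L + 1) (insert L (Finset.Ico τ L)) := by
    ext y
    simp only [Finset.mem_Icc, Finset.mem_insert, Finset.mem_Ico]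
    omega
  have hterm_high : ∀ x, L ≤ x →
      ext n w x n - ext n w x (rho (n + 1) (ext n w x)) = x - τ := by
    intro x hx
    rw [rho_ext_high hn hx, ext_apply_n, ext_apply_lt hrl]
  have hterm_low : ∀ x, x < L →
      ext n w x n - ext n w x (rho (n + 1) (ext n w x)) = 0 := by
    intro x hx
    rw [rho_ext_low hn hx, ext_apply_n]
    omega
  rw [hdec, Finset.sum_insert (by simp only [Finset.mem_insert, Finset.mem_Ico]; omega),
    Finset.sum_insert (by simp only [Finset.mem_Ico]; omega)]
  rw [hterm_high (L + 1) (by omega), hterm_high L le_rfl]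
  rw [Finset.sum_congr rfl (fun x hx => hterm_low x (Finset.mem_Ico.mp hx).2)]
  simp only [Finset.sum_const_zero]
  omega

lemma gsum_succ (hn : 1 ≤ n) :
    ∑ w' ∈ FS (n + 1), (w' n - w' (rho (n + 1) w'))
      = ∑ w ∈ FS n, (2 * (w (n - 1) - w (rho n w)) + 1) := by
  rw [← Finset.sum_fiberwise_of_maps_to (g := trunc n) (t := FS n)
    (fun w' hw' => mem_FS.mpr (trunc_mem hn (mem_FS.mp hw')))]
  refine Finset.sum_congr rfl (fun w hw => ?_)
  rw [fiber_eq hn (mem_FS.mp hw),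
    Finset.sum_image (fun x _ y _ h => ext_inj n w h)]
  exact fiber_sum hn (mem_FS.mp hw)

lemma FS_one : FS 1 = {fun _ => 0} := by
  ext w
  simp only [mem_FS, Finset.mem_singleton]
  constructor
  · rintro ⟨⟨h0, -, hvan⟩, -⟩
    funext i
    cases i with
    | zero => exact h0
    | succ i => exact hvan _ (by omega)
  · rintro rfl
    exact ⟨⟨rfl, fun i hi => by omega, fun i _ => rfl⟩, fun i j _ _ _ => le_rfl⟩

lemma main_count : ∀ n, 1 ≤ n →
    (FS n).card = (∑ w ∈ FS n, (w (n - 1) - w (rho n w))) + 1 ∧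
      2 * (FS n).card = 3 ^ (n - 1) + 1 := by
  intro n
  induction n with
  | zero => omega
  | succ n ih =>
    intro _
    rcases Nat.eq_or_lt_of_le (Nat.one_le_iff_ne_zero.mpr (Nat.succ_ne_zero n)) with h1 | h1
    · -- n + 1 = 1
      have hn0 : n = 0 := by omega
      subst hn0
      rw [FS_one]
      simp
    · have hn : 1 ≤ n := by omega
      obtain ⟨ihg, ihf⟩ := ih hn
      clear ih
      have hcard : (FS (n + 1)).card
          = (∑ w ∈ FS n, (w (n - 1) - w (rho n w))) + 2 * (FS n).card := by
        rw [card_succ hn,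
          Finset.sum_congr rfl (fun w hw =>
            show w (n - 1) + 2 - w (rho n w) = (w (n - 1) - w (rho n w)) + 2 from by
              have h2 := tau_le_last (w := w) hn
              clear ihg ihf
              omega),
          Finset.sum_add_distrib, Finset.sum_const, smul_eq_mul, Nat.mul_comm]
      have hg : (∑ w' ∈ FS (n + 1), (w' n - w' (rho (n + 1) w')))
          = 2 * (∑ w ∈ FS n, (w (n - 1) - w (rho n w))) + (FS n).card := by
        rw [gsum_succ hn, Finset.sum_add_distrib, ← Finset.mul_sum, Finset.sum_const,
          smul_eq_mul, mul_one]
      have hpow : (3 : ℕ) ^ n = 3 ^ (n - 1) * 3 := by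
        conv_lhs => rw [show n = n - 1 + 1 from (Nat.succ_pred_eq_of_pos hn).symm]
        rw [pow_succ]
      have e1 : (n + 1) - 1 = n := rfl
      simp only [e1]
      generalize hA : (∑ w ∈ FS n, (w (n - 1) - w (rho n w))) = A at ihg hcard hg
      generalize hB : (∑ w' ∈ FS (n + 1), (w' n - w' (rho (n + 1) w'))) = B at hg ⊢
      clear hA hB
      constructor
      · omega
      · omega

section EvenCount

variable {m : ℕ}

/-- support of a ternary word -/
def supp (a : Fin m → Fin 3) : Finset (Fin m) := Finset.univ.filter (fun i => a i ≠ 0)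

/-- flip the first nonzero letter between 1 and 2 -/
noncomputable def flip (a : Fin m → Fin 3) : Fin m → Fin 3 :=
  if h : (supp a).Nonempty then
    Function.update a ((supp a).min' h) (-(a ((supp a).min' h)))
  else a

lemma flip_apply {a : Fin m → Fin 3} (h : (supp a).Nonempty) :
    flip a = Function.update a ((supp a).min' h) (-(a ((supp a).min' h))) := dif_pos h

lemma supp_flip (a : Fin m → Fin 3) : supp (flip a) = supp a := by
  by_cases h : (supp a).Nonempty
  · ext j
    simp only [supp, Finset.mem_filter, Finset.mem_univ, true_and]
    rw [flip_apply h]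
    rcases eq_or_ne j ((supp a).min' h) with rfl | hne
    · rw [Function.update_self]
      simp
    · rw [Function.update_of_ne hne]
  · rw [flip, dif_neg h]

lemma min'_congr {α : Type*} [LinearOrder α] {s t : Finset α} (h : s = t)
    (hs : s.Nonempty) (ht : t.Nonempty) : s.min' hs = t.min' ht := by
  subst h; rfl

lemma flip_flip (a : Fin m → Fin 3) : flip (flip a) = a := by
  by_cases h : (supp a).Nonempty
  · have h2 : (supp (flip a)).Nonempty := by rw [supp_flip]; exact h
    have hm : (supp (flip a)).min' h2 = (supp a).min' h := min'_congr (supp_flip a) h2 h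
    rw [flip_apply h2, hm, flip_apply h, Function.update_self, neg_neg,
      Function.update_idem, Function.update_eq_self]
  · have h2 : ¬ (supp (flip a)).Nonempty := by rw [supp_flip]; exact h
    rw [flip, dif_neg h2, flip, dif_neg h]

lemma flip_parity {a : Fin m → Fin 3} (h : (supp a).Nonempty) :
    Even (∑ i, ((flip a) i : ℕ)) ↔ ¬ Even (∑ i, (a i : ℕ)) := by
  set i0 := (supp a).min' h with hi0def
  have hi0 : a i0 ≠ 0 := by
    have := Finset.min'_mem (supp a) h
    simp only [supp, Finset.mem_filter, Finset.mem_univ, true_and] at this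
    exact this
  have hval : (a i0 : ℕ) + ((-(a i0) : Fin 3) : ℕ) = 3 := by
    revert hi0
    generalize a i0 = x
    revert x
    decide
  have hfun : ∀ j, ((flip a) j : ℕ)
      = Function.update (fun j => (a j : ℕ)) i0 ((-(a i0) : Fin 3) : ℕ) j := by
    intro j
    rw [flip_apply h, ← hi0def]
    exact Function.apply_update (β := fun _ => ℕ)
      (fun (_ : Fin m) (x : Fin 3) => (x : ℕ)) a i0 (-(a i0)) j
  have h1 : ∑ j, ((flip a) j : ℕ)
      = ((-(a i0) : Fin 3) : ℕ) + ∑ j ∈ Finset.univ \ {i0}, (a j : ℕ) := by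
    rw [Finset.sum_congr rfl (fun j _ => hfun j)]
    exact Finset.sum_update_of_mem (Finset.mem_univ i0) _ _
  have h2 : ∑ j, (a j : ℕ) = (a i0 : ℕ) + ∑ j ∈ Finset.univ \ {i0}, (a j : ℕ) :=
    Finset.sum_eq_add_sum_sdiff_singleton_of_mem (Finset.mem_univ i0) _
  rw [h1, h2, Nat.even_iff, Nat.even_iff]
  omega

lemma supp_nonempty_of_ne {a : Fin m → Fin 3} (ha : a ≠ fun _ => 0) :
    (supp a).Nonempty := by
  rw [supp, Finset.filter_nonempty_iff]
  by_contra hc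
  push_neg at hc
  exact ha (funext fun i => by simpa using hc i (Finset.mem_univ i))

lemma even_count (m : ℕ) :
    2 * (Finset.univ.filter
        (fun a : Fin m → Fin 3 => Even (∑ i, (a i : ℕ)))).card = 3 ^ m + 1 := by
  classical
  set E := Finset.univ.filter (fun a : Fin m → Fin 3 => Even (∑ i, (a i : ℕ))) with hE
  set O := Finset.univ.filter (fun a : Fin m → Fin 3 => ¬ Even (∑ i, (a i : ℕ))) with hO
  have htot : E.card + O.card = 3 ^ m := by
    rw [hE, hO, Finset.card_filter_add_card_filter_not]
    simp [Fintype.card_fun]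
  have hz : (fun _ => (0 : Fin 3)) ∈ E := by simp [hE]
  have hzsupp : supp (fun _ => (0 : Fin 3)) = (∅ : Finset (Fin m)) := by
    simp [supp]
  have hcard : (E.erase (fun _ => 0)).card = O.card := by
    apply Finset.card_bij' (fun a _ => flip a) (fun a _ => flip a)
    · intro a ha
      rw [Finset.mem_erase] at ha
      obtain ⟨hane, haE⟩ := ha
      have hs := supp_nonempty_of_ne hane
      rw [hE, Finset.mem_filter] at haE
      rw [hO, Finset.mem_filter]
      refine ⟨Finset.mem_univ _, ?_⟩
      intro hc
      exact ((flip_parity hs).mp hc) haE.2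
    · intro a ha
      rw [hO, Finset.mem_filter] at ha
      have hane : a ≠ fun _ => 0 := by
        rintro rfl
        exact ha.2 (by simp)
      have hs := supp_nonempty_of_ne hane
      rw [Finset.mem_erase]
      constructor
      · intro hc
        have := supp_flip a
        rw [hc, hzsupp] at this
        exact hs.ne_empty this.symm
      · rw [hE, Finset.mem_filter]
        exact ⟨Finset.mem_univ _, (flip_parity hs).mpr ha.2⟩
    · intro a _; exact flip_flip a
    · intro a _; exact flip_flip a
  have hE1 : E.card = O.card + 1 := by
    rw [← hcard, Finset.card_erase_add_one hz]
  omega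

end EvenCount

end FCAux

/-- For every integer `n ≥ 1`, the number of flattened Catalan words of length
`n` equals the number of `(n-1)`-tuples with entries in `{0,1,2}` and even sum. -/
theorem flatCat_card_eq_even_compositions (n : ℕ) (hn : 1 ≤ n) :
    (FlatCat n).ncard =
      {a : Fin (n - 1) → Fin 3 | Even (∑ i, (a i : ℕ))}.ncard := by
  classical
  have h1 : (FlatCat n).ncard = (FCAux.FS n).card :=
    Set.ncard_eq_toFinset_card (FlatCat n) (FCAux.flatCat_finite n)
  have h2 : {a : Fin (n - 1) → Fin 3 | Even (∑ i, (a i : ℕ))}.ncard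
      = (Finset.univ.filter (fun a : Fin (n - 1) → Fin 3 => Even (∑ i, (a i : ℕ)))).card := by
    rw [← Set.ncard_coe_finset]
    congr 1
    ext a
    simp
  have h3 := (FCAux.main_count n hn).2
  have h4 := FCAux.even_count (n - 1)
  rw [h1, h2]
  exact Nat.eq_of_mul_eq_mul_left (by norm_num) (h3.trans h4.symm)
end

section
/- For every integer n ≥ 1, the total number of runs of ascents, summed over all flattened Catalan words of length n, equals (3^(n-1) + 1)(n + 1)/4. -/
section Aux

instance IsRunStart.decidable (n : ℕ) (w : ℕ → ℕ) (j : ℕ) : Decidable (IsRunStart n w j) :=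
  decidable_of_iff (j < n ∧ (j = 0 ∨ w j < w (j - 1))) Iff.rfl

/-- The finset of run-start positions. -/
def RS (n : ℕ) (w : ℕ → ℕ) : Finset ℕ := (Finset.range n).filter (fun j => IsRunStart n w j)

/-- The maximal value at a run start. -/
def MM (n : ℕ) (w : ℕ → ℕ) : ℕ := (RS n w).sup w

lemma mem_RS {n : ℕ} {w : ℕ → ℕ} {j : ℕ} : j ∈ RS n w ↔ IsRunStart n w j := by
  unfold RS
  simp only [Finset.mem_filter, Finset.mem_range]
  exact ⟨fun h => h.2, fun h => ⟨h.1, h⟩⟩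

lemma catalan_le {n : ℕ} {w : ℕ → ℕ} (hc : IsCatalanWord n w) : ∀ i, w i ≤ i := by
  intro i
  induction i with
  | zero => simp [hc.1]
  | succ i ih =>
    by_cases h : i + 1 < n
    · exact le_trans (hc.2.1 i h) (by omega)
    · rw [hc.2.2 (i + 1) (by omega)]; omega

lemma mono_noRS {n : ℕ} {w : ℕ → ℕ} {j : ℕ} :
    ∀ k, j ≤ k → k < n → (∀ i, j < i → i ≤ k → ¬ IsRunStart n w i) → w j ≤ w k := by
  intro k hjk
  induction k, hjk using Nat.le_induction with
  | base => intro _ _; exact le_rfl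
  | succ k hjk ih =>
    intro hk h
    have hw : w k ≤ w (k + 1) := by
      have hnr := h (k + 1) (Nat.lt_succ_of_le hjk) le_rfl
      by_contra hlt
      exact hnr ⟨hk, Or.inr (by simpa using lt_of_not_ge hlt)⟩
    exact le_trans
      (ih (Nat.lt_of_succ_lt hk) (fun i hi hik => h i hi (le_trans hik (Nat.le_succ k)))) hw

lemma runstart_zero {n : ℕ} (w : ℕ → ℕ) (hn : 1 ≤ n) : IsRunStart n w 0 :=
  ⟨hn, Or.inl rfl⟩

lemma le_MM {n : ℕ} {w : ℕ → ℕ} {j : ℕ} (h : IsRunStart n w j) : w j ≤ MM n w :=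
  Finset.le_sup (mem_RS.2 h)

lemma MM_le_last {n : ℕ} {w : ℕ → ℕ} (hn : 1 ≤ n) (hw : w ∈ FlatCat n) :
    MM n w ≤ w (n - 1) := by
  have hne : (RS n w).Nonempty := ⟨0, mem_RS.2 (runstart_zero w hn)⟩
  set j0 := (RS n w).max' hne with hj0
  have hj0mem : IsRunStart n w j0 := mem_RS.1 ((RS n w).max'_mem hne)
  have hj0n : j0 < n := hj0mem.1
  have h1 : w j0 ≤ w (n - 1) := by
    have hle : j0 ≤ n - 1 := by omega
    have hlt : n - 1 < n := by omega
    refine mono_noRS (n - 1) hle hlt ?_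
    intro i hi hik hrs
    have := (RS n w).le_max' i (mem_RS.2 hrs)
    omega
  apply Finset.sup_le
  intro j hj
  exact le_trans (hw.2 j j0 (mem_RS.1 hj) hj0mem ((RS n w).le_max' j hj)) h1

lemma runstart_iff_of_agree {n m : ℕ} {w v : ℕ → ℕ} {j : ℕ} (hj : j < n) (hjm : j < m)
    (h1 : v j = w j) (h2 : v (j - 1) = w (j - 1)) : IsRunStart m v j ↔ IsRunStart n w j := by
  unfold IsRunStart
  rw [h1, h2]
  exact ⟨fun h => ⟨hj, h.2⟩, fun h => ⟨hjm, h.2⟩⟩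

lemma runstart_update_lt {n : ℕ} {w : ℕ → ℕ} {x j : ℕ} (hj : j < n) :
    IsRunStart (n + 1) (Function.update w n x) j ↔ IsRunStart n w j :=
  runstart_iff_of_agree hj (by omega)
    (Function.update_of_ne (by omega) _ _) (Function.update_of_ne (by omega) _ _)

lemma runstart_update_top {n : ℕ} {w : ℕ → ℕ} {x : ℕ} (hn : 1 ≤ n) :
    IsRunStart (n + 1) (Function.update w n x) n ↔ x < w (n - 1) := by
  unfold IsRunStart
  rw [Function.update_self, Function.update_of_ne (by omega)]
  constructor
  · rintro ⟨-, h⟩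
    rcases h with h | h
    · omega
    · exact h
  · intro h
    exact ⟨by omega, Or.inr h⟩

end Aux

section Aux2

lemma update_mem_iff {n : ℕ} {w : ℕ → ℕ} (hn : 1 ≤ n) (hw : w ∈ FlatCat n) (x : ℕ) :
    Function.update w n x ∈ FlatCat (n + 1) ↔ MM n w ≤ x ∧ x ≤ w (n - 1) + 1 := by
  obtain ⟨⟨hw0, hwstep, hwz⟩, hwf⟩ := hw
  have hn1 : n - 1 + 1 = n := by omega
  have hun : Function.update w n x n = x := Function.update_self _ _ _
  have hagree : ∀ i, i ≠ n → Function.update w n x i = w i :=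
    fun i hi => Function.update_of_ne hi _ _
  constructor
  · rintro ⟨hc, hf⟩
    have hxle : x ≤ w (n - 1) + 1 := by
      have := hc.2.1 (n - 1) (by omega)
      rwa [hn1, hun, hagree (n - 1) (by omega)] at this
    refine ⟨?_, hxle⟩
    rcases le_or_gt (w (n - 1)) x with hcase | hcase
    · exact le_trans (MM_le_last hn ⟨⟨hw0, hwstep, hwz⟩, hwf⟩) hcase
    · apply Finset.sup_le
      intro j hj
      have hjr := mem_RS.1 hj
      have hjn : j < n := hjr.1
      have h1 := hf j n ((runstart_update_lt hjn).2 hjr)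
        ((runstart_update_top hn).2 hcase) (le_of_lt hjn)
      rwa [hun, hagree j (by omega)] at h1
  · rintro ⟨hMx, hxle⟩
    refine ⟨⟨?_, ?_, ?_⟩, ?_⟩
    · rw [hagree 0 (by omega)]; exact hw0
    · intro i hi
      by_cases h : i + 1 < n
      · rw [hagree (i + 1) (by omega), hagree i (by omega)]
        exact hwstep i h
      · have hieq : i + 1 = n := by omega
        rw [hieq, hun, hagree i (by omega)]
        have : i = n - 1 := by omega
        rw [this]; exact hxle
    · intro i hi
      rw [hagree i (by omega)]
      exact hwz i (by omega)
    · intro i j hi hj hij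
      by_cases hjn : j < n
      · have hin : i < n := lt_of_le_of_lt hij hjn
        rw [hagree i (by omega), hagree j (by omega)]
        exact hwf i j ((runstart_update_lt hin).1 hi) ((runstart_update_lt hjn).1 hj) hij
      · have hjeq : j = n := by have := hj.1; omega
        rw [hjeq, hun]
        by_cases hin : i < n
        · rw [hagree i (by omega)]
          exact le_trans (le_MM ((runstart_update_lt hin).1 hi)) hMx
        · have hieq : i = n := by have h1 := hi.1; omega
          rw [hieq, hun]

lemma trunc_mem {n : ℕ} {u : ℕ → ℕ} (hn : 1 ≤ n) (hu : u ∈ FlatCat (n + 1)) :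
    Function.update u n 0 ∈ FlatCat n := by
  obtain ⟨⟨hu0, hustep, huz⟩, huf⟩ := hu
  have hagree : ∀ i, i ≠ n → Function.update u n 0 i = u i :=
    fun i hi => Function.update_of_ne hi _ _
  refine ⟨⟨?_, ?_, ?_⟩, ?_⟩
  · rw [hagree 0 (by omega)]; exact hu0
  · intro i hi
    rw [hagree (i + 1) (by omega), hagree i (by omega)]
    exact hustep i (by omega)
  · intro i hi
    by_cases h : i = n
    · rw [h]; exact Function.update_self _ _ _
    · rw [hagree i h]; exact huz i (by omega)
  · intro i j hi hj hij
    have hin : i < n := hi.1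
    have hjn : j < n := hj.1
    rw [hagree i (by omega), hagree j (by omega)]
    refine huf i j ?_ ?_ hij
    · exact (runstart_iff_of_agree (Nat.lt_succ_of_lt hin) hin (hagree i (by omega))
        (hagree (i - 1) (by omega))).1 hi
    · exact (runstart_iff_of_agree (Nat.lt_succ_of_lt hjn) hjn (hagree j (by omega))
        (hagree (j - 1) (by omega))).1 hj

lemma update_trunc {n : ℕ} {u : ℕ → ℕ} :
    Function.update (Function.update u n 0) n (u n) = u := by
  funext i
  by_cases h : i = n
  · subst h; simp
  · rw [Function.update_of_ne h, Function.update_of_ne h]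

lemma trunc_update {n : ℕ} {w : ℕ → ℕ} (hwz : w n = 0) (x : ℕ) :
    Function.update (Function.update w n x) n 0 = w := by
  funext i
  by_cases h : i = n
  · subst h; simp [hwz]
  · rw [Function.update_of_ne h, Function.update_of_ne h]

end Aux2

section Aux3

lemma RS_update_ge {n : ℕ} {w : ℕ → ℕ} {x : ℕ} (hn : 1 ≤ n) (hx : w (n - 1) ≤ x) :
    RS (n + 1) (Function.update w n x) = RS n w := by
  ext j
  rw [mem_RS, mem_RS]
  by_cases hj : j < n
  · exact runstart_update_lt hj
  · constructor
    · intro h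
      have hj1 : j < n + 1 := h.1
      have hjn : j = n := by omega
      rw [hjn] at h
      have := (runstart_update_top hn).1 h
      omega
    · intro h
      exact absurd h.1 hj

lemma RS_update_lt {n : ℕ} {w : ℕ → ℕ} {x : ℕ} (hn : 1 ≤ n) (hx : x < w (n - 1)) :
    RS (n + 1) (Function.update w n x) = insert n (RS n w) := by
  ext j
  rw [mem_RS, Finset.mem_insert, mem_RS]
  by_cases hj : j < n
  · rw [runstart_update_lt hj]
    constructor
    · exact Or.inr
    · rintro (h | h)
      · omega
      · exact h
  · constructor
    · intro h
      have hj1 : j < n + 1 := h.1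
      exact Or.inl (by omega)
    · rintro (h | h)
      · rw [h]; exact (runstart_update_top hn).2 hx
      · exact absurd h.1 hj

lemma MM_update_ge {n : ℕ} {w : ℕ → ℕ} {x : ℕ} (hn : 1 ≤ n) (hx : w (n - 1) ≤ x) :
    MM (n + 1) (Function.update w n x) = MM n w := by
  unfold MM
  rw [RS_update_ge hn hx]
  apply Finset.sup_congr rfl
  intro j hj
  exact Function.update_of_ne (by have := (mem_RS.1 hj).1; omega) _ _

lemma MM_update_lt {n : ℕ} {w : ℕ → ℕ} {x : ℕ} (hn : 1 ≤ n) (hMx : MM n w ≤ x)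
    (hx : x < w (n - 1)) : MM (n + 1) (Function.update w n x) = x := by
  unfold MM
  rw [RS_update_lt hn hx, Finset.sup_insert]
  have h1 : (RS n w).sup (Function.update w n x) = (RS n w).sup w :=
    Finset.sup_congr rfl fun j hj =>
      Function.update_of_ne (by have := (mem_RS.1 hj).1; omega) _ _
  rw [h1, Function.update_self]
  exact sup_eq_left.2 hMx

/-- number of strict ascents -/
def ascC (n : ℕ) (w : ℕ → ℕ) : ℕ :=
  ((Finset.range (n - 1)).filter (fun i => w (i + 1) = w i + 1)).card

lemma runsAsc_add_ascC {n : ℕ} {w : ℕ → ℕ} (hn : 1 ≤ n) (hc : IsCatalanWord n w) :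
    runsAsc n w + ascC n w = n := by
  have hset : {i : ℕ | i + 1 < n ∧ w (i + 1) ≤ w i} =
      ↑((Finset.range (n - 1)).filter (fun i => w (i + 1) ≤ w i)) := by
    ext i
    simp only [Set.mem_setOf_eq, Finset.coe_filter, Finset.mem_range]
    constructor
    · rintro ⟨h1, h2⟩; exact ⟨by omega, h2⟩
    · rintro ⟨h1, h2⟩; exact ⟨by omega, h2⟩
  have hfilt : (Finset.range (n - 1)).filter (fun i => w (i + 1) = w i + 1) =
      (Finset.range (n - 1)).filter (fun i => ¬ (w (i + 1) ≤ w i)) := by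
    apply Finset.filter_congr
    intro i hi
    rw [Finset.mem_range] at hi
    have := hc.2.1 i (by omega)
    constructor
    · intro h; simp; omega
    · intro h; simp at h; omega
  rw [runsAsc, hset, Set.ncard_coe_finset, ascC, hfilt]
  have := Finset.card_filter_add_card_filter_not (s := Finset.range (n - 1))
    (p := fun i => w (i + 1) ≤ w i)
  rw [Finset.card_range] at this
  omega

lemma ascC_update {n : ℕ} {w : ℕ → ℕ} (hn : 1 ≤ n) (x : ℕ) :
    ascC (n + 1) (Function.update w n x) = ascC n w + if x = w (n - 1) + 1 then 1 else 0 := by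
  have hagree : ∀ i, i ≠ n → Function.update w n x i = w i :=
    fun i hi => Function.update_of_ne hi _ _
  unfold ascC
  have hr : n + 1 - 1 = (n - 1) + 1 := by omega
  rw [hr, Finset.range_add_one, Finset.filter_insert]
  have hfilt : (Finset.range (n - 1)).filter
        (fun i => Function.update w n x (i + 1) = Function.update w n x i + 1) =
      (Finset.range (n - 1)).filter (fun i => w (i + 1) = w i + 1) := by
    apply Finset.filter_congr
    intro i hi
    rw [Finset.mem_range] at hi
    rw [hagree (i + 1) (by omega), hagree i (by omega)]
  have hn1 : n - 1 + 1 = n := by omega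
  have htop : (Function.update w n x (n - 1 + 1) = Function.update w n x (n - 1) + 1) ↔
      (x = w (n - 1) + 1) := by
    rw [hn1, Function.update_self, hagree (n - 1) (by omega)]
  by_cases hcase : x = w (n - 1) + 1
  · rw [if_pos (htop.2 hcase), if_pos hcase, hfilt, Finset.card_insert_of_notMem
      (fun hmem => by have := Finset.mem_range.1 (Finset.mem_of_mem_filter _ hmem); omega)]
  · rw [if_neg (fun h => hcase (htop.1 h)), if_neg hcase, hfilt, Nat.add_zero]

lemma flatcat_finite (n : ℕ) : (FlatCat n).Finite := by
  have hsub : FlatCat n ⊆ Set.range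
      (fun f : Fin n → Fin (n + 1) => fun i => if h : i < n then (f ⟨i, h⟩ : ℕ) else 0) := by
    intro w hw
    have hb : ∀ i, w i < n + 1 := fun i => by
      by_cases h : i < n
      · exact lt_of_le_of_lt (catalan_le hw.1 i) (by omega)
      · rw [hw.1.2.2 i (by omega)]; omega
    refine ⟨fun i => ⟨w i, hb i⟩, ?_⟩
    funext i
    by_cases h : i < n
    · simp [h]
    · simp [h, hw.1.2.2 i (by omega)]
  exact (Set.finite_range _).subset hsub

lemma sum_step (k : ℕ) (f : (ℕ → ℕ) → ℚ) :
    ∑ u ∈ (flatcat_finite (k + 2)).toFinset, f u =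
      ∑ w ∈ (flatcat_finite (k + 1)).toFinset,
        ∑ x ∈ Finset.Icc (MM (k + 1) w) (w k + 1), f (Function.update w (k + 1) x) := by
  rw [Finset.sum_sigma' ((flatcat_finite (k + 1)).toFinset)
    (fun w => Finset.Icc (MM (k + 1) w) (w k + 1)) (fun w x => f (Function.update w (k + 1) x))]
  apply Finset.sum_bij'
    (i := fun u _ => (⟨Function.update u (k + 1) 0, u (k + 1)⟩ : Σ _ : ℕ → ℕ, ℕ))
    (j := fun p _ => Function.update p.1 (k + 1) p.2)
  · intro u hu
    rw [Set.Finite.mem_toFinset] at hu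
    have htr : Function.update u (k + 1) 0 ∈ FlatCat (k + 1) := trunc_mem (by omega) hu
    rw [Finset.mem_sigma, Set.Finite.mem_toFinset]
    refine ⟨htr, ?_⟩
    rw [Finset.mem_Icc]
    have hmem : Function.update (Function.update u (k + 1) 0) (k + 1) (u (k + 1))
        ∈ FlatCat (k + 2) := by rw [update_trunc]; exact hu
    have := (update_mem_iff (by omega) htr (u (k + 1))).1 hmem
    have hk1 : k + 1 - 1 = k := by omega
    rw [hk1] at this
    exact this
  · intro p hp
    rw [Finset.mem_sigma, Set.Finite.mem_toFinset, Finset.mem_Icc] at hp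
    rw [Set.Finite.mem_toFinset]
    have hk1 : k + 1 - 1 = k := by omega
    exact (update_mem_iff (by omega) hp.1 p.2).2 (by rw [hk1]; exact hp.2)
  · intro u hu
    exact update_trunc
  · intro p hp
    rw [Finset.mem_sigma, Set.Finite.mem_toFinset] at hp
    have hz : p.1 (k + 1) = 0 := hp.1.1.2.2 (k + 1) le_rfl
    refine Sigma.ext ?_ ?_
    · simp [trunc_update hz]
    · simp
  · intro u hu
    rw [update_trunc]

end Aux3

section Aux4

lemma icc_split {m a : ℕ} (hma : m ≤ a) :
    Finset.Icc m (a + 1) = insert (a + 1) (insert a (Finset.Ico m a)) := by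
  ext y
  simp only [Finset.mem_Icc, Finset.mem_insert, Finset.mem_Ico]
  omega

lemma notMem_split1 {m a : ℕ} : a + 1 ∉ insert a (Finset.Ico m a) := by
  simp only [Finset.mem_insert, Finset.mem_Ico]
  omega

lemma notMem_split2 {m a : ℕ} : a ∉ Finset.Ico m a := by
  simp only [Finset.mem_Ico]; omega

lemma master (k : ℕ) :
    (∑ _w ∈ (flatcat_finite (k + 1)).toFinset, (1 : ℚ)) = (3 ^ k + 1) / 2 ∧
    (∑ w ∈ (flatcat_finite (k + 1)).toFinset, ((w k : ℚ) - (MM (k + 1) w : ℚ)))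
      = (3 ^ k - 1) / 2 ∧
    (∑ w ∈ (flatcat_finite (k + 1)).toFinset, (ascC (k + 1) w : ℚ))
      = k * (3 ^ k + 1) / 4 ∧
    (∑ w ∈ (flatcat_finite (k + 1)).toFinset,
        ((w k : ℚ) - (MM (k + 1) w : ℚ)) * (ascC (k + 1) w : ℚ))
      = (k + 1) * (3 ^ k - 1) / 4 := by
  induction k with
  | zero =>
    have hset : FlatCat 1 = {fun _ => 0} := by
      ext w
      constructor
      · intro hw
        have : ∀ i, w i = 0 := by
          intro i
          rcases Nat.eq_zero_or_pos i with h | h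
          · rw [h]; exact hw.1.1
          · exact hw.1.2.2 i h
        exact funext this
      · rintro rfl
        refine ⟨⟨rfl, fun i _ => by omega, fun i _ => rfl⟩, fun i j _ _ _ => le_rfl⟩
    have hfs : (flatcat_finite 1).toFinset = {fun _ => (0 : ℕ)} := by
      ext w
      rw [Set.Finite.mem_toFinset, hset]
      simp
    have hMM : MM 1 (fun _ => (0 : ℕ)) = 0 := by
      unfold MM
      apply Nat.le_antisymm _ (Nat.zero_le _)
      apply Finset.sup_le
      intro j _
      exact le_rfl
    have hasc : ascC 1 (fun _ => (0 : ℕ)) = 0 := by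
      unfold ascC
      simp
    rw [hfs]
    simp [hMM, hasc]
  | succ k ih =>
    obtain ⟨hT, hS, hB, hC⟩ := ih
    -- notation
    set F := (flatcat_finite (k + 1)).toFinset with hF
    have hmemF : ∀ w ∈ F, w ∈ FlatCat (k + 1) := fun w hw => (Set.Finite.mem_toFinset _).1 hw
    have hma : ∀ w ∈ F, MM (k + 1) w ≤ w k := by
      intro w hw
      have := MM_le_last (n := k + 1) (by omega) (hmemF w hw)
      simpa using this
    have hk1 : k + 1 - 1 = k := by omega
    -- inner sum computations
    have key : ∀ w ∈ F, ∀ g : ℕ → ℚ,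
        (∑ x ∈ Finset.Icc (MM (k + 1) w) (w k + 1), g x) =
          g (w k + 1) + g (w k) + ∑ x ∈ Finset.Ico (MM (k + 1) w) (w k), g x := by
      intro w hw g
      rw [icc_split (hma w hw), Finset.sum_insert notMem_split1,
        Finset.sum_insert notMem_split2]
      ring
    -- per-word facts
    have hMMup_lt : ∀ w ∈ F, ∀ x, MM (k + 1) w ≤ x → x < w k →
        MM (k + 2) (Function.update w (k + 1) x) = x := by
      intro w hw x h1 h2
      have := MM_update_lt (n := k + 1) (by omega) h1 (by rwa [hk1])
      exact this
    have hMMup_ge : ∀ w ∈ F, ∀ x, w k ≤ x →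
        MM (k + 2) (Function.update w (k + 1) x) = MM (k + 1) w := by
      intro w hw x h1
      exact MM_update_ge (n := k + 1) (by omega) (by rwa [hk1])
    have hascup : ∀ (w : ℕ → ℕ) (x : ℕ),
        (ascC (k + 2) (Function.update w (k + 1) x) : ℚ) =
          (ascC (k + 1) w : ℚ) + if x = w k + 1 then 1 else 0 := by
      intro w x
      have := ascC_update (n := k + 1) (by omega) (w := w) x
      rw [hk1] at this
      rw [this]
      push_cast
      split <;> simp
    have hupdval : ∀ (w : ℕ → ℕ) (x : ℕ), Function.update w (k + 1) x (k + 1) = x :=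
      fun w x => Function.update_self _ _ _
    -- the four inner sums
    have inner1 : ∀ w ∈ F,
        (∑ _x ∈ Finset.Icc (MM (k + 1) w) (w k + 1), (1 : ℚ)) =
          ((w k : ℚ) - MM (k + 1) w) + 2 := by
      intro w hw
      rw [key w hw]
      rw [Finset.sum_const, Nat.card_Ico, nsmul_eq_mul, mul_one,
        Nat.cast_sub (hma w hw)]
      ring
    have inner2 : ∀ w ∈ F,
        (∑ x ∈ Finset.Icc (MM (k + 1) w) (w k + 1),
            ((Function.update w (k + 1) x (k + 1) : ℚ) -
              (MM (k + 2) (Function.update w (k + 1) x) : ℚ))) =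
          2 * ((w k : ℚ) - MM (k + 1) w) + 1 := by
      intro w hw
      rw [key w hw]
      have h0 : ∑ x ∈ Finset.Ico (MM (k + 1) w) (w k),
          ((Function.update w (k + 1) x (k + 1) : ℚ) -
            (MM (k + 2) (Function.update w (k + 1) x) : ℚ)) = 0 := by
        apply Finset.sum_eq_zero
        intro x hx
        rw [Finset.mem_Ico] at hx
        rw [hupdval, hMMup_lt w hw x hx.1 hx.2]
        ring
      rw [h0, hupdval, hupdval, hMMup_ge w hw (w k + 1) (by omega),
        hMMup_ge w hw (w k) le_rfl]
      push_cast
      ring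
    have inner3 : ∀ w ∈ F,
        (∑ x ∈ Finset.Icc (MM (k + 1) w) (w k + 1),
            (ascC (k + 2) (Function.update w (k + 1) x) : ℚ)) =
          (((w k : ℚ) - MM (k + 1) w) + 2) * (ascC (k + 1) w : ℚ) + 1 := by
      intro w hw
      rw [key w hw]
      have h0 : ∑ x ∈ Finset.Ico (MM (k + 1) w) (w k),
          (ascC (k + 2) (Function.update w (k + 1) x) : ℚ) =
          (w k - MM (k + 1) w : ℕ) * (ascC (k + 1) w : ℚ) := by
        have hcg : ∀ x ∈ Finset.Ico (MM (k + 1) w) (w k),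
            (ascC (k + 2) (Function.update w (k + 1) x) : ℚ) = (ascC (k + 1) w : ℚ) := by
          intro x hx
          rw [hascup w x, if_neg (by rw [Finset.mem_Ico] at hx; omega)]
          ring
        rw [Finset.sum_congr rfl hcg, Finset.sum_const, Nat.card_Ico, nsmul_eq_mul]
      rw [h0, hascup w (w k + 1), if_pos rfl, hascup w (w k), if_neg (by omega),
        Nat.cast_sub (hma w hw)]
      ring
    have inner4 : ∀ w ∈ F,
        (∑ x ∈ Finset.Icc (MM (k + 1) w) (w k + 1),
            ((Function.update w (k + 1) x (k + 1) : ℚ) -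
                (MM (k + 2) (Function.update w (k + 1) x) : ℚ)) *
              (ascC (k + 2) (Function.update w (k + 1) x) : ℚ)) =
          (2 * ((w k : ℚ) - MM (k + 1) w) + 1) * (ascC (k + 1) w : ℚ) +
            ((w k : ℚ) - MM (k + 1) w) + 1 := by
      intro w hw
      rw [key w hw]
      have h0 : ∑ x ∈ Finset.Ico (MM (k + 1) w) (w k),
          ((Function.update w (k + 1) x (k + 1) : ℚ) -
              (MM (k + 2) (Function.update w (k + 1) x) : ℚ)) *
            (ascC (k + 2) (Function.update w (k + 1) x) : ℚ) = 0 := by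
        apply Finset.sum_eq_zero
        intro x hx
        rw [Finset.mem_Ico] at hx
        rw [hupdval, hMMup_lt w hw x hx.1 hx.2]
        ring
      rw [h0, hupdval, hupdval, hMMup_ge w hw (w k + 1) (by omega),
        hMMup_ge w hw (w k) le_rfl, hascup w (w k + 1), if_pos rfl,
        hascup w (w k), if_neg (by omega)]
      push_cast
      ring
    -- outer sums via sum_step
    have hup2 : ∀ (w : ℕ → ℕ) (x : ℕ), Function.update w (k + 1) x (k + 1) = x :=
      hupdval
    refine ⟨?_, ?_, ?_, ?_⟩
    · rw [sum_step k (fun _ => (1 : ℚ)), Finset.sum_congr rfl inner1,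
        Finset.sum_add_distrib, hS]
      have h2 : ∑ _w ∈ F, (2 : ℚ) = 2 * ∑ _w ∈ F, (1 : ℚ) := by
        rw [Finset.mul_sum]; simp
      rw [h2, hT]
      ring
    · rw [sum_step k (fun u => ((u (k + 1) : ℚ) - (MM (k + 2) u : ℚ)))]
      rw [Finset.sum_congr rfl inner2, Finset.sum_add_distrib]
      have h1 : ∑ w ∈ F, 2 * ((w k : ℚ) - MM (k + 1) w) =
          2 * ∑ w ∈ F, ((w k : ℚ) - MM (k + 1) w) := by rw [Finset.mul_sum]
      have h2 : ∑ _w ∈ F, (1 : ℚ) = (3 ^ k + 1) / 2 := hT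
      rw [h1, hS, h2]
      ring_nf
    · rw [sum_step k (fun u => (ascC (k + 2) u : ℚ)),
        Finset.sum_congr rfl inner3, Finset.sum_add_distrib]
      have hexp : ∑ w ∈ F, (((w k : ℚ) - MM (k + 1) w) + 2) * (ascC (k + 1) w : ℚ) =
          (∑ w ∈ F, ((w k : ℚ) - MM (k + 1) w) * (ascC (k + 1) w : ℚ)) +
            2 * ∑ w ∈ F, (ascC (k + 1) w : ℚ) := by
        rw [Finset.mul_sum, ← Finset.sum_add_distrib]
        apply Finset.sum_congr rfl
        intro w _
        ring
      rw [hexp, hC, hB, hT]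
      push_cast
      ring
    · rw [sum_step k (fun u => ((u (k + 1) : ℚ) - (MM (k + 2) u : ℚ)) * (ascC (k + 2) u : ℚ)),
        Finset.sum_congr rfl inner4]
      have hexp : ∑ w ∈ F,
          ((2 * ((w k : ℚ) - MM (k + 1) w) + 1) * (ascC (k + 1) w : ℚ) +
            ((w k : ℚ) - MM (k + 1) w) + 1) =
          2 * (∑ w ∈ F, ((w k : ℚ) - MM (k + 1) w) * (ascC (k + 1) w : ℚ)) +
            (∑ w ∈ F, (ascC (k + 1) w : ℚ)) +
            (∑ w ∈ F, ((w k : ℚ) - MM (k + 1) w)) + ∑ _w ∈ F, (1 : ℚ) := by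
        rw [Finset.mul_sum, ← Finset.sum_add_distrib, ← Finset.sum_add_distrib,
          ← Finset.sum_add_distrib]
        apply Finset.sum_congr rfl
        intro w _
        ring
      rw [hexp, hC, hB, hS, hT]
      push_cast
      ring

end Aux4

/-- For every `n ≥ 1`, the total number of runs of ascents over all flattened
Catalan words of length `n` equals `(3^(n-1) + 1)(n + 1)/4`. -/
theorem flatCat_total_runsAsc (n : ℕ) (hn : 1 ≤ n) :
    ((∑ᶠ w ∈ FlatCat n, runsAsc n w : ℕ) : ℚ) =
      (3 ^ (n - 1) + 1) * ((n : ℚ) + 1) / 4 := by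
  obtain ⟨k, rfl⟩ : ∃ k, n = k + 1 := ⟨n - 1, by omega⟩
  obtain ⟨hT, hS, hB, hC⟩ := master k
  set F := (flatcat_finite (k + 1)).toFinset with hF
  have hcoe : FlatCat (k + 1) = ↑F := (Set.Finite.coe_toFinset _).symm
  rw [hcoe, finsum_mem_coe_finset, Nat.cast_sum]
  have hr : ∀ w ∈ F, (runsAsc (k + 1) w : ℚ) = (k + 1 : ℚ) - (ascC (k + 1) w : ℚ) := by
    intro w hw
    have hmem : w ∈ FlatCat (k + 1) := (Set.Finite.mem_toFinset _).1 hw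
    have := runsAsc_add_ascC (by omega) hmem.1
    have hcast : (runsAsc (k + 1) w : ℚ) + (ascC (k + 1) w : ℚ) = (k + 1 : ℚ) := by
      exact_mod_cast congrArg (Nat.cast : ℕ → ℚ) this
    linarith
  rw [Finset.sum_congr rfl hr, Finset.sum_sub_distrib, hB]
  have hconst : ∑ _w ∈ F, ((k : ℚ) + 1) = ((k : ℚ) + 1) * ∑ _w ∈ F, (1 : ℚ) := by
    rw [Finset.mul_sum]; simp
  rw [hconst, hT]
  have hexp : (k + 1 : ℕ) - 1 = k := by omega
  rw [hexp]
  push_cast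
  ring
end

section
/- For all integers n, k ≥ 1 with n ≥ 2k − 1, the number of flattened Catalan words of length n with exactly k runs of weak ascents equals 2^(n − 2k + 1) · C(n − 1, 2k − 2), where C denotes the binomial coefficient; and this number is 0 when n < 2k − 1. -/
/-!
Flattened Catalan words with `k` runs are in bijection with ternary words of length `n - 1`
containing exactly `2k - 2` letters `2`, of which there are `C(n-1, 2k-2) * 2^(n+1-2k)`.
Read the steps of the word from left to right: a flat step is coded `0`, a descent `2`.
In a flattened word each descent returns to a height that its own run has already climbed
through, by a unique ascent; that ascent is coded `2` as well and every other ascent `1`.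
So the letters `2` alternate between such a matched ascent and the descent closing it, and the
word is recovered by a decoder that, at an odd-numbered `2`, goes up and remembers its current
height, and at an even-numbered `2` falls back to the remembered height.
-/

namespace FlatCatalan

open Finset

theorem exists_forall_Icc_and_not_succ {P : ℕ → Prop} {a b : ℕ} (hab : a ≤ b) (ha : P a)
    (hb : ¬P b) : ∃ c, a ≤ c ∧ c < b ∧ (∀ l, a ≤ l → l ≤ c → P l) ∧ ¬P (c + 1) := by
  classical
  have hex : ∃ m, ¬P (a + m) := ⟨b - a, by rwa [Nat.add_sub_cancel' hab]⟩
  have hpos : Nat.find hex ≠ 0 := fun h => Nat.find_spec hex (by rwa [h])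
  refine ⟨a + Nat.find hex - 1, by omega, ?_, fun l hal hlc => ?_, ?_⟩
  · have := Nat.find_min' hex (m := b - a) (by rwa [Nat.add_sub_cancel' hab])
    omega
  · by_contra hl
    have := Nat.find_min' hex (m := l - a) (by rwa [Nat.add_sub_cancel' hal])
    omega
  · rw [show a + Nat.find hex - 1 + 1 = a + Nat.find hex by omega]
    exact Nat.find_spec hex

theorem le_of_forall_le_succ {f : ℕ → ℕ} {a b : ℕ} (hab : a ≤ b)
    (h : ∀ l, a ≤ l → l < b → f l ≤ f (l + 1)) : f a ≤ f b := by
  induction b, hab using Nat.le_induction with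
  | base => rfl
  | succ b hab ih =>
    exact (ih fun l hal hlb => h l hal (by omega)).trans (h b hab (by omega))

section Word

variable {n i p q : ℕ} {w : ℕ → ℕ}

def descents (n : ℕ) (w : ℕ → ℕ) : Finset ℕ := (range (n - 1)).filter fun i => w (i + 1) < w i

def ascents (n : ℕ) (w : ℕ → ℕ) : Finset ℕ := (range (n - 1)).filter fun i => w i < w (i + 1)

def matchedAscents (n : ℕ) (w : ℕ → ℕ) : Finset ℕ :=
  (ascents n w).filter fun p =>
    ∃ q ∈ descents n w, p < q ∧ w (q + 1) = w p ∧ ∀ l ∈ Ioo p q, l ∉ descents n w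

/-- Position `i` stands for the step from `w i` to `w (i + 1)`. The code of a word has the symbol
`2` on `S` (descents and matched ascents), `1` on `T` (the other ascents), `0` on flat steps. -/
def encode (n : ℕ) (w : ℕ → ℕ) : Σ _ : Finset ℕ, Finset ℕ :=
  ⟨descents n w ∪ matchedAscents n w, ascents n w \ matchedAscents n w⟩

def IsPendingAt (n : ℕ) (w : ℕ → ℕ) (p i : ℕ) : Prop :=
  p < i ∧ p ∈ matchedAscents n w ∧ ∀ l, p ≤ l → l < i → l ∉ descents n w

theorem wruns_eq_one_add_card_descents (n : ℕ) (w : ℕ → ℕ) :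
    wruns n w = 1 + (descents n w).card := by
  rw [wruns, ← Set.ncard_coe_finset]
  congr 2
  ext i
  simp only [Set.mem_ofPred_eq, descents, coe_filter, mem_range]
  omega

theorem mem_descents : i ∈ descents n w ↔ i + 1 < n ∧ w (i + 1) < w i := by
  simp only [descents, mem_filter, mem_range]; omega

theorem mem_ascents : i ∈ ascents n w ↔ i + 1 < n ∧ w i < w (i + 1) := by
  simp only [ascents, mem_filter, mem_range]; omega

theorem le_of_forall_not_mem_descents {a b : ℕ} (hab : a ≤ b) (hbn : b < n)
    (h : ∀ l, a ≤ l → l < b → l ∉ descents n w) : w a ≤ w b :=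
  le_of_forall_le_succ hab fun l hal hlb => by
    have := h l hal hlb
    rw [mem_descents] at this
    omega

theorem encode_congr {w' : ℕ → ℕ} (h : ∀ i < n, w i = w' i) : encode n w = encode n w' := by
  have hd : descents n w = descents n w' := by
    ext i; simp only [mem_descents]; constructor <;> rintro ⟨hi, hlt⟩ <;>
      simp_all [h i (by omega), h (i + 1) hi]
  have ha : ascents n w = ascents n w' := by
    ext i; simp only [mem_ascents]; constructor <;> rintro ⟨hi, hlt⟩ <;>
      simp_all [h i (by omega), h (i + 1) hi]
  have hm : matchedAscents n w = matchedAscents n w' := by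
    rw [matchedAscents, matchedAscents, ha, hd]
    refine filter_congr fun p hp => ?_
    refine exists_congr fun q => and_congr_right fun hq => ?_
    rw [mem_descents] at hq
    rw [mem_ascents] at hp
    rw [h p (by omega), h (q + 1) hq.1]
  rw [encode, encode, hd, ha, hm]

theorem encode_fst_subset : (encode n w).1 ⊆ range (n - 1) :=
  union_subset (filter_subset _ _) ((filter_subset _ _).trans (filter_subset _ _))

theorem exists_isRunStart_le (hq : q < n) :
    ∃ s ≤ q, IsRunStart n w s ∧ ∀ l, s ≤ l → l < q → l ∉ descents n w := by
  induction q with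
  | zero => exact ⟨0, le_rfl, ⟨hq, Or.inl rfl⟩, fun l h₁ h₂ => by omega⟩
  | succ q ih =>
    by_cases hd : q ∈ descents n w
    · refine ⟨q + 1, le_rfl, ⟨hq, Or.inr ?_⟩, fun l h₁ h₂ => by omega⟩
      simpa using (mem_descents.1 hd).2
    · obtain ⟨s, hsq, hs, hnd⟩ := ih (by omega)
      refine ⟨s, by omega, hs, fun l h₁ h₂ => ?_⟩
      rcases Nat.lt_succ_iff_lt_or_eq.1 h₂ with h₂ | rfl
      exacts [hnd l h₁ h₂, hd]

/-- In a flattened word a descent lands at a height already reached inside its own run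
(the run starts no higher), so the run climbs through that height by an ascent. -/
theorem exists_isPendingAt_of_mem_descents (hw : IsCatalanWord n w) (hf : IsFlattened n w)
    (hq : q ∈ descents n w) : ∃ p, IsPendingAt n w p q ∧ w p = w (q + 1) := by
  obtain ⟨hqn, hqd⟩ := mem_descents.1 hq
  obtain ⟨s, hsq, hs, hnd⟩ := exists_isRunStart_le (w := w) (show q < n by omega)
  have hsq' : w s ≤ w (q + 1) := hf s (q + 1) hs ⟨hqn, Or.inr (by simpa using hqd)⟩ (by omega)
  obtain ⟨p, hsp, hpq, hle, hgt⟩ :=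
    exists_forall_Icc_and_not_succ (P := fun l => w l ≤ w (q + 1)) hsq hsq' (by omega)
  have hstep := hw.2.1 p (by omega)
  have hwp : w p = w (q + 1) := by have := hle p hsp le_rfl; omega
  refine ⟨p, ⟨hpq, ?_, fun l h₁ h₂ => hnd l (by omega) h₂⟩, hwp⟩
  refine mem_filter.2 ⟨mem_ascents.2 ⟨by omega, by omega⟩, q, hq, hpq, hwp.symm, ?_⟩
  exact fun l hl => hnd l (by have := (mem_Ioo.1 hl).1; omega) (mem_Ioo.1 hl).2

theorem IsPendingAt.eq {p p' i : ℕ} (h : IsPendingAt n w p i) (h' : IsPendingAt n w p' i) :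
    p = p' := by
  wlog hlt : p < p' generalizing p p'
  · rcases lt_trichotomy p p' with hlt' | heq | hgt
    exacts [this h h' hlt', heq, (this h' h hgt).symm]
  exfalso
  obtain ⟨hpi, hpm, hpd⟩ := h
  obtain ⟨hpi', hpm', hpd'⟩ := h'
  obtain ⟨hpa, q, hq, hpq, hwq, hqd⟩ := mem_filter.1 hpm
  obtain ⟨hpa', q', hq', hpq', hwq', hqd'⟩ := mem_filter.1 hpm'
  have hiq : i ≤ q := by by_contra! hc; exact hpd q hpq.le hc hq
  have hqq : q = q' := by
    by_contra hne
    rcases Nat.lt_or_gt_of_ne hne with hlt' | hgt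
    · exact hqd' q (mem_Ioo.2 ⟨by omega, hlt'⟩) hq
    · exact hqd q' (mem_Ioo.2 ⟨by omega, hgt⟩) hq'
  subst hqq
  have hup := (mem_ascents.1 hpa).2
  have hmono : w (p + 1) ≤ w p' :=
    le_of_forall_not_mem_descents hlt (by have := (mem_ascents.1 hpa').1; omega)
      fun l h₁ h₂ => hpd l (by omega) (by omega)
  omega

theorem not_isPendingAt_succ_of_mem_descents (hi : i ∈ descents n w) :
    ¬IsPendingAt n w p (i + 1) :=
  fun ⟨hpi, _, hpd⟩ => hpd i (by omega) (by omega) hi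

theorem isPendingAt_succ_self (hi : i ∈ matchedAscents n w) : IsPendingAt n w i (i + 1) := by
  refine ⟨by omega, hi, fun l h₁ h₂ hl => ?_⟩
  obtain rfl : l = i := by omega
  have := (mem_ascents.1 (mem_filter.1 hi).1).2
  have := (mem_descents.1 hl).2
  omega

theorem IsPendingAt.succ (h : IsPendingAt n w p i) (hd : i ∉ descents n w) :
    IsPendingAt n w p (i + 1) := by
  obtain ⟨hpi, hpm, hpd⟩ := h
  refine ⟨by omega, hpm, fun l h₁ h₂ => ?_⟩
  rcases Nat.lt_succ_iff_lt_or_eq.1 h₂ with h₂ | rfl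
  exacts [hpd l h₁ h₂, hd]

theorem not_isPendingAt_of_mem_matchedAscents (hi : i ∈ matchedAscents n w) :
    ¬IsPendingAt n w p i := fun hp => by
  have hd : i ∉ descents n w := fun hd => by
    have := (mem_ascents.1 (mem_filter.1 hi).1).2
    have := (mem_descents.1 hd).2
    omega
  have := (hp.succ hd).eq (isPendingAt_succ_self hi)
  have := hp.1
  omega

theorem isPendingAt_succ_iff (hd : i ∉ descents n w) (hm : i ∉ matchedAscents n w) :
    IsPendingAt n w p (i + 1) ↔ IsPendingAt n w p i := by
  refine ⟨fun ⟨hpi, hpm, hpd⟩ => ?_, fun h => h.succ hd⟩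
  have hpi' : p ≠ i := by rintro rfl; exact hm hpm
  exact ⟨by omega, hpm, fun l h₁ h₂ => hpd l h₁ (by omega)⟩

end Word

/-- The state of the decoder: the current letter, the height `mark` that the next descent
returns to, and whether an ascent coded `2` is waiting for that descent. -/
structure ScanState where
  val : ℕ
  mark : ℕ
  pending : Bool

def ScanState.step (S T : Finset ℕ) (i : ℕ) (s : ScanState) : ScanState :=
  if i ∈ S then
    if s.pending then ⟨s.mark, s.mark, false⟩ else ⟨s.val + 1, s.val, true⟩
  else if i ∈ T then ⟨s.val + 1, s.mark, s.pending⟩ else s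

def scan (S T : Finset ℕ) : ℕ → ScanState
  | 0 => ⟨0, 0, false⟩
  | i + 1 => (scan S T i).step S T i

def decode (n : ℕ) (S T : Finset ℕ) (i : ℕ) : ℕ := if i < n then (scan S T i).val else 0

section Decoder

variable {n : ℕ} {S T : Finset ℕ} {i : ℕ}

theorem scan_succ (S T : Finset ℕ) (i : ℕ) : scan S T (i + 1) = (scan S T i).step S T i := rfl

theorem scan_succ_of_mem_of_pending (hi : i ∈ S) (hp : (scan S T i).pending) :
    scan S T (i + 1) = ⟨(scan S T i).mark, (scan S T i).mark, false⟩ := by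
  simp [scan_succ, ScanState.step, hi, hp]

theorem scan_succ_of_mem_of_not_pending (hi : i ∈ S) (hp : ¬(scan S T i).pending) :
    scan S T (i + 1) = ⟨(scan S T i).val + 1, (scan S T i).val, true⟩ := by
  simp [scan_succ, ScanState.step, hi, hp]

theorem scan_succ_of_not_mem (hi : i ∉ S) :
    scan S T (i + 1) = ⟨(scan S T i).val + if i ∈ T then 1 else 0, (scan S T i).mark,
      (scan S T i).pending⟩ := by
  by_cases hT : i ∈ T <;> simp [scan_succ, ScanState.step, hi, hT]

theorem scan_mark_le_val (S T : Finset ℕ) (i : ℕ) :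
    (scan S T i).mark ≤ (scan S T i).val ∧
      ((scan S T i).pending → (scan S T i).mark < (scan S T i).val) := by
  induction i with
  | zero => simp [scan]
  | succ i ih =>
    by_cases hi : i ∈ S
    · by_cases hp : (scan S T i).pending
      · simp [scan_succ_of_mem_of_pending hi hp]
      · simp [scan_succ_of_mem_of_not_pending hi hp]
    · rw [scan_succ_of_not_mem hi]
      dsimp only
      exact ⟨by split <;> omega, fun hp => by have := ih.2 hp; split <;> omega⟩

theorem scan_val_succ_le (S T : Finset ℕ) (i : ℕ) :
    (scan S T (i + 1)).val ≤ (scan S T i).val + 1 := by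
  have := scan_mark_le_val S T i
  by_cases hi : i ∈ S
  · by_cases hp : (scan S T i).pending
    · rw [scan_succ_of_mem_of_pending hi hp]; dsimp only; omega
    · rw [scan_succ_of_mem_of_not_pending hi hp]
  · rw [scan_succ_of_not_mem hi]; dsimp only; split <;> omega

theorem scan_val_succ_lt_iff :
    (scan S T (i + 1)).val < (scan S T i).val ↔ i ∈ S ∧ (scan S T i).pending := by
  have := scan_mark_le_val S T i
  by_cases hi : i ∈ S
  · by_cases hp : (scan S T i).pending
    · simp only [scan_succ_of_mem_of_pending hi hp, hi, hp, true_and, iff_true]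
      exact this.2 hp
    · simp [scan_succ_of_mem_of_not_pending hi hp, hp]
  · rw [scan_succ_of_not_mem hi]; simp [hi]

theorem scan_val_lt_succ_iff :
    (scan S T i).val < (scan S T (i + 1)).val ↔
      i ∈ S ∧ ¬(scan S T i).pending ∨ i ∉ S ∧ i ∈ T := by
  have := scan_mark_le_val S T i
  by_cases hi : i ∈ S
  · by_cases hp : (scan S T i).pending
    · rw [scan_succ_of_mem_of_pending hi hp]
      simpa [hi, hp] using this.1
    · simp [scan_succ_of_mem_of_not_pending hi hp, hp, hi]
  · rw [scan_succ_of_not_mem hi]; by_cases hT : i ∈ T <;> simp [hi, hT]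

theorem scan_pending_succ_eq_iff :
    (scan S T (i + 1)).pending = (scan S T i).pending ↔ i ∉ S := by
  by_cases hi : i ∈ S
  · by_cases hp : (scan S T i).pending
    · simp [scan_succ_of_mem_of_pending hi hp, hi, hp]
    · simp [scan_succ_of_mem_of_not_pending hi hp, hi, hp]
  · simp [scan_succ_of_not_mem hi, hi]

theorem scan_mark_succ_of_pending (hp : (scan S T i).pending) :
    (scan S T (i + 1)).mark = (scan S T i).mark := by
  by_cases hi : i ∈ S
  · rw [scan_succ_of_mem_of_pending hi hp]
  · rw [scan_succ_of_not_mem hi]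

theorem scan_mark_monotone (S T : Finset ℕ) : Monotone fun i => (scan S T i).mark := by
  refine monotone_nat_of_le_succ fun i => ?_
  have := scan_mark_le_val S T i
  by_cases hi : i ∈ S
  · by_cases hp : (scan S T i).pending
    · simp [scan_succ_of_mem_of_pending hi hp]
    · simp [scan_succ_of_mem_of_not_pending hi hp, this.1]
  · simp [scan_succ_of_not_mem hi]

theorem scan_mark_eq_of_forall_pending {a b : ℕ} (hab : a ≤ b)
    (h : ∀ l, a ≤ l → l < b → (scan S T l).pending) : (scan S T b).mark = (scan S T a).mark := by
  induction b, hab using Nat.le_induction with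
  | base => rfl
  | succ b hab ih =>
    rw [scan_mark_succ_of_pending (h b hab (by omega)), ih fun l h₁ h₂ => h l h₁ (by omega)]

theorem two_mul_card_filter_pending_add (S T : Finset ℕ) (t : ℕ) :
    2 * ((range t).filter fun i => i ∈ S ∧ (scan S T i).pending).card +
      (scan S T t).pending.toNat = ((range t).filter (· ∈ S)).card := by
  induction t with
  | zero => simp [scan]
  | succ t ih =>
    have ht : t ∉ range t := by simp
    rw [range_add_one, filter_insert, filter_insert]
    by_cases hi : t ∈ S
    · by_cases hp : (scan S T t).pending
      · rw [if_pos ⟨hi, hp⟩, if_pos hi, card_insert_of_notMem (mt (mem_of_mem_filter t) ht),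
          card_insert_of_notMem (mt (mem_of_mem_filter t) ht), scan_succ_of_mem_of_pending hi hp]
        rw [hp, Bool.toNat_true] at ih
        simp only [Bool.toNat_false]
        omega
      · rw [if_neg fun h => hp h.2, if_pos hi, card_insert_of_notMem (mt (mem_of_mem_filter t) ht),
          scan_succ_of_mem_of_not_pending hi hp]
        rw [Bool.not_eq_true] at hp
        rw [hp, Bool.toNat_false] at ih
        simp only [Bool.toNat_true]
        omega
    · rw [if_neg fun h => hi h.1, if_neg hi, scan_succ_of_not_mem hi]
      exact ih


theorem decode_of_lt (h : i < n) : decode n S T i = (scan S T i).val := if_pos h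

theorem isCatalanWord_decode : IsCatalanWord n (decode n S T) := by
  refine ⟨by simp [decode, scan], fun i hi => ?_, fun i hi => if_neg (by omega)⟩
  rw [decode_of_lt hi, decode_of_lt (by omega)]
  exact scan_val_succ_le S T i

theorem decode_eq_mark_of_isRunStart {j : ℕ} (h : IsRunStart n (decode n S T) j) (hj : j ≠ 0) :
    decode n S T j = (scan S T j).mark := by
  obtain ⟨hjn, rfl | hlt⟩ := h
  · exact absurd rfl hj
  obtain ⟨i, rfl⟩ := Nat.exists_eq_succ_of_ne_zero hj
  rw [decode_of_lt hjn, decode_of_lt (by omega)] at *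
  obtain ⟨hi, hp⟩ := scan_val_succ_lt_iff.1 (by simpa using hlt)
  rw [scan_succ_of_mem_of_pending hi hp]

theorem isFlattened_decode : IsFlattened n (decode n S T) := by
  intro i j hi hj hij
  rcases Nat.eq_zero_or_pos i with rfl | hi0
  · simp [decode, scan]
  rw [decode_eq_mark_of_isRunStart hi hi0.ne', decode_eq_mark_of_isRunStart hj (by omega)]
  exact scan_mark_monotone S T hij

theorem decode_mem_flatCat : decode n S T ∈ FlatCat n :=
  ⟨isCatalanWord_decode, isFlattened_decode⟩

theorem descents_decode :
    descents n (decode n S T) = (range (n - 1)).filter fun i => i ∈ S ∧ (scan S T i).pending := by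
  refine filter_congr fun i hi => ?_
  rw [mem_range] at hi
  rw [decode_of_lt (by omega), decode_of_lt (by omega), scan_val_succ_lt_iff]

theorem wruns_decode (hS : S ⊆ range (n - 1)) : wruns n (decode n S T) = 1 + S.card / 2 := by
  have h := two_mul_card_filter_pending_add S T (n - 1)
  rw [filter_mem_eq_inter, inter_eq_right.2 hS] at h
  rw [wruns_eq_one_add_card_descents, descents_decode]
  have := Bool.toNat_le (scan S T (n - 1)).pending
  omega

end Decoder

/-- Ternary codes of length `m` with `r` symbols `2`, as the pair (positions of `2`,
positions of `1`). -/
def codes (m r : ℕ) : Finset (Σ _ : Finset ℕ, Finset ℕ) :=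
  (powersetCard r (range m)).sigma fun S => (range m \ S).powerset

theorem mem_codes {m r : ℕ} {c : Σ _ : Finset ℕ, Finset ℕ} :
    c ∈ codes m r ↔ c.1 ⊆ range m ∧ c.1.card = r ∧ c.2 ⊆ range m \ c.1 := by
  simp [codes, and_assoc]

theorem card_codes (m r : ℕ) : (codes m r).card = m.choose r * 2 ^ (m - r) := by
  rw [codes, card_sigma, sum_congr rfl fun S hS => by
    rw [card_powerset, card_sdiff_of_subset (mem_powersetCard.1 hS).1, card_range,
      (mem_powersetCard.1 hS).2], sum_const, card_powersetCard, card_range, smul_eq_mul]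

section RoundTrip

variable {n : ℕ} {w : ℕ → ℕ} {S T : Finset ℕ}

theorem scan_encode (hw : IsCatalanWord n w) (hf : IsFlattened n w) {i : ℕ} (hi : i ≤ n - 1) :
    (scan (encode n w).1 (encode n w).2 i).val = w i ∧
      ((scan (encode n w).1 (encode n w).2 i).pending ↔ ∃ p, IsPendingAt n w p i) ∧
      ∀ p, IsPendingAt n w p i → (scan (encode n w).1 (encode n w).2 i).mark = w p := by
  induction i with
  | zero =>
    refine ⟨hw.1.symm, ?_, fun p hp => absurd hp.1 (Nat.not_lt_zero p)⟩
    simp [scan, IsPendingAt]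
  | succ i ih =>
    obtain ⟨hval, hpend, hmark⟩ := ih (by omega)
    have hin : i + 1 < n := by omega
    have hstep := hw.2.1 i hin
    by_cases hiS : i ∈ (encode n w).1
    · rcases mem_union.1 hiS with hd | hm
      · obtain ⟨p, hp, hwp⟩ := exists_isPendingAt_of_mem_descents hw hf hd
        have hno := fun p => not_isPendingAt_succ_of_mem_descents (p := p) hd
        rw [scan_succ_of_mem_of_pending hiS (hpend.2 ⟨p, hp⟩)]
        exact ⟨by rw [← hwp, hmark p hp], by simpa using hno, fun p hp => absurd hp (hno p)⟩
      · have hup := (mem_ascents.1 (mem_filter.1 hm).1).2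
        have hself := isPendingAt_succ_self hm
        have hnp : ¬(scan (encode n w).1 (encode n w).2 i).pending := fun hp => by
          obtain ⟨p, hp⟩ := hpend.1 hp
          exact not_isPendingAt_of_mem_matchedAscents hm hp
        rw [scan_succ_of_mem_of_not_pending hiS hnp]
        exact ⟨by dsimp only; omega, by simpa using ⟨i, hself⟩,
          fun p hp => by rw [hp.eq hself]; exact hval⟩
    · have hd : i ∉ descents n w := fun h => hiS (mem_union_left _ h)
      have hm : i ∉ matchedAscents n w := fun h => hiS (mem_union_right _ h)
      rw [scan_succ_of_not_mem hiS]
      refine ⟨?_, by simpa [isPendingAt_succ_iff hd hm] using hpend,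
        fun p hp => hmark p ((isPendingAt_succ_iff hd hm).1 hp)⟩
      have hT : i ∈ (encode n w).2 ↔ w i < w (i + 1) := by
        simp [encode, hm, mem_ascents, hin]
      rw [mem_descents] at hd
      dsimp only
      by_cases hiT : i ∈ (encode n w).2
      · rw [if_pos hiT]; have := hT.1 hiT; omega
      · rw [if_neg hiT]; have := mt hT.2 hiT; omega

theorem decode_encode (hw : w ∈ FlatCat n) : decode n (encode n w).1 (encode n w).2 = w := by
  funext i
  by_cases hi : i < n
  · rw [decode_of_lt hi, (scan_encode hw.1 hw.2 (by omega)).1]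
  · rw [decode, if_neg hi, hw.1.2.2 i (by omega)]

theorem not_scan_pending_of_even {m : ℕ} (hS : S ⊆ range m)
    (heven : Even S.card) : ¬(scan S T m).pending := by
  have h := two_mul_card_filter_pending_add S T m
  rw [filter_mem_eq_inter, inter_eq_right.2 hS] at h
  obtain ⟨r, hr⟩ := heven
  intro hp
  rw [hp] at h
  simp only [Bool.toNat_true] at h
  omega

theorem card_encode_fst (hw : w ∈ FlatCat n) :
    (encode n w).1.card = 2 * (descents n w).card := by
  have h := two_mul_card_filter_pending_add (encode n w).1 (encode n w).2 (n - 1)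
  rw [filter_mem_eq_inter, inter_eq_right.2 encode_fst_subset] at h
  have hnp : ¬(scan (encode n w).1 (encode n w).2 (n - 1)).pending := by
    rw [(scan_encode hw.1 hw.2 le_rfl).2.1]
    rintro ⟨p, -, hpm, hpd⟩
    obtain ⟨-, q, hq, hpq, -, -⟩ := mem_filter.1 hpm
    exact hpd q hpq.le (by have := (mem_descents.1 hq).1; omega) hq
  rw [Bool.not_eq_true] at hnp
  rw [hnp, Bool.toNat_false, add_zero, ← descents_decode, decode_encode hw] at h
  omega

theorem encode_mem_codes (hw : w ∈ FlatCat n) :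
    encode n w ∈ codes (n - 1) (2 * (descents n w).card) := by
  refine mem_codes.2 ⟨encode_fst_subset, card_encode_fst hw, fun i hi => ?_⟩
  obtain ⟨hia, him⟩ := mem_sdiff.1 hi
  have := mem_ascents.1 hia
  refine mem_sdiff.2 ⟨mem_range.2 (by omega), ?_⟩
  rw [encode, mem_union, not_or]
  exact ⟨fun hd => by have := mem_descents.1 hd; omega, him⟩

theorem exists_closing_descent {a b : ℕ} (hab : a ≤ b) (ha : (scan S T a).pending)
    (hb : ¬(scan S T b).pending) :
    ∃ c, a ≤ c ∧ c < b ∧ c ∈ S ∧ (scan S T c).pending ∧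
      (scan S T c).mark = (scan S T a).mark ∧ ∀ l, a ≤ l → l < c → l ∉ S := by
  obtain ⟨c, hac, hcb, hpend, hc⟩ :=
    exists_forall_Icc_and_not_succ (P := fun l => (scan S T l).pending) hab ha hb
  have hcS : c ∈ S := by
    by_contra hcS
    exact hc (by rw [scan_pending_succ_eq_iff.2 hcS]; exact hpend c hac le_rfl)
  refine ⟨c, hac, hcb, hcS, hpend c hac le_rfl,
    scan_mark_eq_of_forall_pending hac fun l h₁ h₂ => hpend l h₁ h₂.le, fun l h₁ h₂ => ?_⟩
  rw [← scan_pending_succ_eq_iff, hpend l h₁ h₂.le, hpend (l + 1) (by omega) h₂]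

theorem descents_scan (hS : S ⊆ range (n - 1)) :
    descents n (fun i => (scan S T i).val) = S.filter fun i => (scan S T i).pending := by
  ext i
  simp only [mem_descents, mem_filter, scan_val_succ_lt_iff]
  have := @hS i
  simp only [mem_range] at this
  constructor
  · exact fun h => ⟨h.2.1, h.2.2⟩
  · exact fun h => ⟨by have := this h.1; omega, h⟩

theorem ascents_scan (hS : S ⊆ range (n - 1)) (hT : T ⊆ range (n - 1) \ S) :
    ascents n (fun i => (scan S T i).val) = S.filter (fun i => ¬(scan S T i).pending) ∪ T := by
  ext i
  simp only [mem_ascents, mem_union, mem_filter, scan_val_lt_succ_iff]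
  have h1 := @hS i
  have h2 := @hT i
  simp only [mem_range, mem_sdiff] at h1 h2
  constructor
  · rintro ⟨-, h | h⟩
    exacts [Or.inl h, Or.inr h.2]
  · rintro (h | h)
    · exact ⟨by have := h1 h.1; omega, Or.inl h⟩
    · exact ⟨by have := (h2 h).1; omega, Or.inr ⟨(h2 h).2, h⟩⟩

theorem scan_mark_eq_of_forall_not_descent {a q : ℕ} (haq : a ≤ q) (ha : (scan S T a).pending)
    (hq : q ∈ S) (hqp : (scan S T q).pending)
    (h : ∀ l, a ≤ l → l < q → ¬(l ∈ S ∧ (scan S T l).pending)) :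
    (scan S T q).mark = (scan S T a).mark := by
  obtain ⟨c, hac, hcq, hcS, hcp, hcm, -⟩ := exists_closing_descent (show a ≤ q + 1 by omega) ha
    (by rw [scan_succ_of_mem_of_pending hq hqp]; simp)
  obtain rfl : c = q := by
    by_contra hne
    exact h c hac (by omega) ⟨hcS, hcp⟩
  exact hcm

/-- A matched ascent of the decoded word cannot be coded `1`: the descent matched with it
returns to the mark, which lies below the ascent if the decoder was pending there, and above it
if a `2` opened a new mark in between. -/
theorem mem_and_not_pending_of_mem_matchedAscents_scan {i : ℕ}
    (hi : i ∈ matchedAscents n fun i => (scan S T i).val) :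
    i ∈ S ∧ ¬(scan S T i).pending := by
  simp only [matchedAscents, mem_filter, mem_ascents, mem_descents] at hi
  obtain ⟨⟨hin, hup⟩, q, ⟨hqn, hqd⟩, hiq, hwq, hnd⟩ := hi
  refine (scan_val_lt_succ_iff.1 hup).resolve_right fun ⟨hiS, _⟩ => ?_
  obtain ⟨hqS, hqp⟩ := scan_val_succ_lt_iff.1 hqd
  rw [scan_succ_of_mem_of_pending hqS hqp] at hwq
  dsimp only at hwq
  have hndS : ∀ l, i ≤ l → l < q → ¬(l ∈ S ∧ (scan S T l).pending) := fun l h₁ h₂ h => by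
    rcases h₁.eq_or_lt with rfl | h₁
    · exact hiS h.1
    · exact hnd l (mem_Ioo.2 ⟨h₁, h₂⟩) ⟨by omega, scan_val_succ_lt_iff.2 h⟩
  by_cases hp : (scan S T i).pending
  · have := (scan_mark_le_val S T i).2 hp
    have := scan_mark_eq_of_forall_not_descent hiq.le hp hqS hqp hndS
    omega
  · obtain ⟨j, hij, hjq, hnpj, hpj⟩ := exists_forall_Icc_and_not_succ
      (P := fun l => ¬(scan S T l).pending) hiq.le hp (by simpa using hqp)
    have hjS : j ∈ S := by
      by_contra hjS
      exact hpj (by rw [scan_pending_succ_eq_iff.2 hjS]; exact hnpj j hij le_rfl)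
    have hji : i < j := lt_of_le_of_ne hij fun h => hiS (h ▸ hjS)
    have hj := scan_succ_of_mem_of_not_pending (T := T) hjS (hnpj j hij le_rfl)
    have hmono : (scan S T (i + 1)).val ≤ (scan S T j).val :=
      le_of_forall_le_succ (f := fun l => (scan S T l).val) (by omega) fun l h₁ h₂ => by
        have := hnd l (mem_Ioo.2 ⟨by omega, by omega⟩)
        omega
    have := scan_mark_eq_of_forall_not_descent (a := j + 1) (by omega) (by rw [hj]) hqS hqp
      fun l h₁ h₂ => hndS l (by omega) h₂
    rw [hj] at this
    dsimp only at this
    omega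

theorem mem_matchedAscents_scan (hS : S ⊆ range (n - 1)) (heven : Even S.card) {i : ℕ}
    (hiS : i ∈ S) (hnp : ¬(scan S T i).pending) :
    i ∈ matchedAscents n fun i => (scan S T i).val := by
  have hin : i < n - 1 := mem_range.1 (hS hiS)
  have hnext := scan_succ_of_mem_of_not_pending (T := T) hiS hnp
  obtain ⟨c, hic, hcn, hcS, hcp, hcm, hnS⟩ := exists_closing_descent (S := S) (T := T)
    (a := i + 1) (b := n - 1) hin (by rw [hnext]) (not_scan_pending_of_even hS heven)
  simp only [matchedAscents, mem_filter, mem_ascents, mem_descents]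
  refine ⟨⟨by omega, scan_val_lt_succ_iff.2 (Or.inl ⟨hiS, hnp⟩)⟩, c,
    ⟨by omega, scan_val_succ_lt_iff.2 ⟨hcS, hcp⟩⟩, by omega, ?_, fun l hl => ?_⟩
  · rw [scan_succ_of_mem_of_pending hcS hcp]
    dsimp only
    rw [hcm, hnext]
  · rw [scan_val_succ_lt_iff]
    exact fun h => hnS l (mem_Ioo.1 hl).1 (mem_Ioo.1 hl).2 h.2.1

theorem matchedAscents_scan (hS : S ⊆ range (n - 1)) (heven : Even S.card) :
    matchedAscents n (fun i => (scan S T i).val) = S.filter fun i => ¬(scan S T i).pending := by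
  ext i
  rw [mem_filter]
  exact ⟨mem_and_not_pending_of_mem_matchedAscents_scan,
    fun ⟨hiS, hnp⟩ => mem_matchedAscents_scan hS heven hiS hnp⟩

end RoundTrip

theorem encode_decode {n : ℕ} {S T : Finset ℕ} (hS : S ⊆ range (n - 1))
    (hT : T ⊆ range (n - 1) \ S) (heven : Even S.card) :
    encode n (decode n S T) = ⟨S, T⟩ := by
  have hdisj : Disjoint (S.filter fun i => ¬(scan S T i).pending) T :=
    disjoint_of_subset_left (filter_subset _ _) (subset_sdiff.1 hT).2.symm
  rw [encode_congr fun i hi => decode_of_lt hi, encode, descents_scan hS, ascents_scan hS hT,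
    matchedAscents_scan hS heven, filter_union_filter_not_eq, union_sdiff_cancel_left hdisj]

theorem ncard_flatCat_wruns_eq_card_codes {n k : ℕ} (hk : 1 ≤ k) :
    {w ∈ FlatCat n | wruns n w = k}.ncard = (codes (n - 1) (2 * k - 2)).card := by
  set decodeCode := fun c : Σ _ : Finset ℕ, Finset ℕ => decode n c.1 c.2
  have himage : {w ∈ FlatCat n | wruns n w = k} = decodeCode '' ↑(codes (n - 1) (2 * k - 2)) := by
    ext w
    constructor
    · rintro ⟨hw, hk⟩
      refine ⟨encode n w, ?_, decode_encode hw⟩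
      rw [wruns_eq_one_add_card_descents] at hk
      rw [← hk, show 2 * (1 + (descents n w).card) - 2 = 2 * (descents n w).card by omega]
      exact encode_mem_codes hw
    · rintro ⟨c, hc, rfl⟩
      obtain ⟨hS, hcard, -⟩ := mem_codes.1 hc
      refine ⟨decode_mem_flatCat, ?_⟩
      rw [wruns_decode hS, hcard]
      omega
  have hinj : Set.InjOn decodeCode ↑(codes (n - 1) (2 * k - 2)) := by
    refine Set.LeftInvOn.injOn (f₁' := encode n) fun c hc => ?_
    obtain ⟨hS, hcard, hT⟩ := mem_codes.1 hc
    exact encode_decode hS hT ⟨k - 1, by omega⟩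
  rw [himage, hinj.ncard_image, Set.ncard_coe_finset]

end FlatCatalan

open FlatCatalan in
/-- For `n, k ≥ 1` with `n ≥ 2k - 1`, the number of flattened Catalan words of
length `n` with exactly `k` runs of weak ascents equals
`2^(n - 2k + 1) * C(n - 1, 2k - 2)`; it is `0` when `n < 2k - 1`. -/
theorem flatCat_wruns_card (n k : ℕ) (hn : 1 ≤ n) (hk : 1 ≤ k) :
    (2 * k - 1 ≤ n →
      {w ∈ FlatCat n | wruns n w = k}.ncard =
        2 ^ (n + 1 - 2 * k) * Nat.choose (n - 1) (2 * k - 2)) ∧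
    (n < 2 * k - 1 → {w ∈ FlatCat n | wruns n w = k}.ncard = 0) := by
  rw [ncard_flatCat_wruns_eq_card_codes hk, card_codes]
  refine ⟨fun h => ?_, fun h => ?_⟩
  · rw [mul_comm, show n - 1 - (2 * k - 2) = n + 1 - 2 * k by omega]
  · rw [Nat.choose_eq_zero_of_lt (by omega), zero_mul]
end

section
/- For every integer n ≥ 1, the total number of runs of weak ascents, summed over all flattened Catalan words of length n, equals (27 − 9n + (5 + n)·3^n)/36. -/
namespace FCAux

/-- `rstart` of a *reversed* word (head = last letter): the value at the start
of the last maximal weakly increasing run. -/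
def rstart : List ℕ → ℕ
  | [] => 0
  | [a] => a
  | a :: b :: t => if b ≤ a then rstart (b :: t) else a

/-- number of descents of the reversed word. -/
def descL : List ℕ → ℕ
  | a :: b :: t => (if a < b then 1 else 0) + descL (b :: t)
  | _ => 0

def gapL (l : List ℕ) : ℕ := l.headD 0 - rstart l

def allowed (l : List ℕ) : Finset ℕ :=
  insert (l.headD 0) (insert (l.headD 0 + 1) (Finset.Ico (rstart l) (l.headD 0)))

def F : ℕ → Finset (List ℕ)
  | 0 => ∅
  | 1 => {[0]}
  | (n+2) => (F (n+1)).biUnion (fun l => (allowed l).image (fun b => b :: l))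

lemma mem_F_succ {n : ℕ} {l' : List ℕ} :
    l' ∈ F (n+2) ↔ ∃ l ∈ F (n+1), ∃ b ∈ allowed l, b :: l = l' := by
  simp [F, Finset.mem_biUnion, Finset.mem_image]

lemma length_of_mem_F : ∀ n, ∀ l ∈ F n, l.length = n := by
  intro n
  induction n using Nat.strong_induction_on with
  | _ n ih =>
    match n with
    | 0 => simp [F]
    | 1 => intro l hl; simp [F] at hl; simp [hl]
    | (m+2) =>
      intro l hl
      obtain ⟨t, ht, b, _, rfl⟩ := mem_F_succ.1 hl
      simp [ih (m+1) (by omega) t ht]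

lemma ne_nil_of_mem_F {n : ℕ} (hn : 1 ≤ n) {l : List ℕ} (hl : l ∈ F n) : l ≠ [] := by
  have := length_of_mem_F n l hl
  intro h; subst h; simp at this; omega

lemma rstart_le_headD : ∀ n, ∀ l ∈ F n, rstart l ≤ l.headD 0 := by
  intro n
  induction n using Nat.strong_induction_on with
  | _ n ih =>
    match n with
    | 0 => simp [F]
    | 1 => intro l hl; simp [F] at hl; simp [hl, rstart]
    | (m+2) =>
      intro l hl
      obtain ⟨t, ht, b, hb, rfl⟩ := mem_F_succ.1 hl
      have htne : t ≠ [] := ne_nil_of_mem_F (by omega) ht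
      obtain ⟨a, t', rfl⟩ := List.exists_cons_of_ne_nil htne
      have hsa : rstart (a :: t') ≤ a := by simpa using ih (m+1) (by omega) _ ht
      simp only [rstart, List.headD_cons]
      split
      · next h => exact le_trans hsa h
      · exact le_refl _

lemma mem_allowed {l : List ℕ} {b : ℕ} :
    b ∈ allowed l ↔ b = l.headD 0 ∨ b = l.headD 0 + 1 ∨ (rstart l ≤ b ∧ b < l.headD 0) := by
  simp [allowed, Finset.mem_Ico]

end FCAux

namespace FCAux

lemma sum_F_succ {M : Type*} [AddCommMonoid M] (n : ℕ) (φ : List ℕ → M) :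
    ∑ l' ∈ F (n+2), φ l' = ∑ l ∈ F (n+1), ∑ b ∈ allowed l, φ (b :: l) := by
  rw [show F (n+2) = (F (n+1)).biUnion (fun l => (allowed l).image (fun b => b :: l)) from rfl]
  rw [Finset.sum_biUnion]
  · refine Finset.sum_congr rfl fun l _ => ?_
    rw [Finset.sum_image]
    intro x _ y _ h
    exact (List.cons.injEq _ _ _ _ ▸ h).1
  · intro l₁ _ l₂ _ hne
    simp only [Function.onFun, Finset.disjoint_left]
    intro x hx₁ hx₂
    simp only [Finset.mem_image] at hx₁ hx₂
    obtain ⟨b₁, _, rfl⟩ := hx₁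
    obtain ⟨b₂, _, h⟩ := hx₂
    exact hne ((List.cons.injEq _ _ _ _ ▸ h).2.symm)

lemma head_notmem₁ (a s : ℕ) : a ∉ insert (a+1) (Finset.Ico s a) := by
  simp [Finset.mem_Ico]

lemma head_notmem₂ (a s : ℕ) : a + 1 ∉ Finset.Ico s a := by
  simp [Finset.mem_Ico]

lemma sum_allowed {M : Type*} [AddCommMonoid M] (l : List ℕ) (φ : ℕ → M) :
    ∑ b ∈ allowed l, φ b =
      φ (l.headD 0) + φ (l.headD 0 + 1) + ∑ b ∈ Finset.Ico (rstart l) (l.headD 0), φ b := by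
  rw [allowed, Finset.sum_insert (head_notmem₁ _ _), Finset.sum_insert (head_notmem₂ _ _), add_assoc]

-- statistics of cons
lemma rstart_cons (b a : ℕ) (t : List ℕ) :
    rstart (b :: a :: t) = if a ≤ b then rstart (a :: t) else b := rfl

lemma descL_cons (b a : ℕ) (t : List ℕ) :
    descL (b :: a :: t) = (if b < a then 1 else 0) + descL (a :: t) := rfl

lemma gapL_cons_stay (a : ℕ) (t : List ℕ) :
    gapL (a :: a :: t) = gapL (a :: t) := by
  simp [gapL, rstart_cons]

lemma gapL_cons_up (a : ℕ) (t : List ℕ) (hsa : rstart (a :: t) ≤ a) :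
    gapL ((a+1) :: a :: t) = gapL (a :: t) + 1 := by
  simp [gapL, rstart_cons]
  omega

lemma gapL_cons_down {b a : ℕ} (t : List ℕ) (hba : b < a) :
    gapL (b :: a :: t) = 0 := by
  simp [gapL, rstart_cons, Nat.not_le.2 hba]

end FCAux

namespace FCAux

noncomputable def Tq (m : ℕ) : ℚ := ∑ _l ∈ F (m+1), (1 : ℚ)
noncomputable def Sq (m : ℕ) : ℚ := ∑ l ∈ F (m+1), (gapL l : ℚ)
noncomputable def Dq (m : ℕ) : ℚ := ∑ l ∈ F (m+1), (descL l : ℚ)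
noncomputable def Eq' (m : ℕ) : ℚ := ∑ l ∈ F (m+1), (descL l : ℚ) * (gapL l : ℚ)

lemma F_one : F 1 = {[0]} := rfl

lemma sum_Ico_const (s a : ℕ) (c : ℚ) :
    ∑ _b ∈ Finset.Ico s a, c = (a - s : ℕ) * c := by
  rw [Finset.sum_const, Nat.card_Ico, nsmul_eq_mul]

/-- the key step: combined recursion for the four statistics. -/
lemma step_rec (m : ℕ) :
    Tq (m+1) = 2 * Tq m + Sq m ∧
    Sq (m+1) = Tq m + 2 * Sq m ∧
    Dq (m+1) = 2 * Dq m + Eq' m + Sq m ∧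
    Eq' (m+1) = Dq m + 2 * Eq' m := by
  have key : ∀ φ : List ℕ → ℚ, ∑ l' ∈ F (m+2), φ l'
      = ∑ l ∈ F (m+1), (φ ((l.headD 0) :: l) + φ ((l.headD 0 + 1) :: l)
          + ∑ b ∈ Finset.Ico (rstart l) (l.headD 0), φ (b :: l)) := by
    intro φ
    rw [sum_F_succ]
    exact Finset.sum_congr rfl fun l _ => sum_allowed l _
  have shape : ∀ l ∈ F (m+1), ∃ a t, l = a :: t ∧ rstart l ≤ a := by
    intro l hl
    obtain ⟨a, t, rfl⟩ := List.exists_cons_of_ne_nil (ne_nil_of_mem_F (by omega) hl)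
    exact ⟨a, t, rfl, by simpa using rstart_le_headD _ _ hl⟩
  refine ⟨?_, ?_, ?_, ?_⟩
  · rw [Tq, key]
    rw [show (2:ℚ) * Tq m + Sq m = ∑ l ∈ F (m+1), (2 * 1 + (gapL l : ℚ)) by
      simp only [Tq, Sq, Finset.mul_sum, ← Finset.sum_add_distrib]]
    refine Finset.sum_congr rfl fun l hl => ?_
    obtain ⟨a, t, rfl, hsa⟩ := shape l hl
    rw [sum_Ico_const]
    simp only [List.headD_cons, gapL]
    push_cast [Nat.cast_sub hsa]
    ring
  · rw [Sq, key]
    rw [show Tq m + 2 * Sq m = ∑ l ∈ F (m+1), (1 + 2 * (gapL l : ℚ)) by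
      simp only [Tq, Sq, Finset.mul_sum, ← Finset.sum_add_distrib]]
    refine Finset.sum_congr rfl fun l hl => ?_
    obtain ⟨a, t, rfl, hsa⟩ := shape l hl
    simp only [List.headD_cons]
    have h1 : ∀ b ∈ Finset.Ico (rstart (a :: t)) a, ((gapL (b :: a :: t) : ℚ)) = 0 := by
      intro b hb
      rw [gapL_cons_down t (Finset.mem_Ico.1 hb).2]
      simp
    rw [Finset.sum_congr rfl h1, gapL_cons_stay, gapL_cons_up a t hsa, Finset.sum_const]
    push_cast
    ring
  · rw [Dq, key]
    rw [show 2*Dq m + Eq' m + Sq m = ∑ l ∈ F (m+1),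
        ((2 + (gapL l : ℚ)) * (descL l : ℚ) + (gapL l : ℚ)) by
      simp only [Dq, Eq', Sq, ← Finset.sum_add_distrib, Finset.mul_sum]
      refine Finset.sum_congr rfl fun l _ => by ring]
    refine Finset.sum_congr rfl fun l hl => ?_
    obtain ⟨a, t, rfl, hsa⟩ := shape l hl
    simp only [List.headD_cons]
    have h1 : ∀ b ∈ Finset.Ico (rstart (a :: t)) a, ((descL (b :: a :: t) : ℚ))
        = (descL (a :: t) : ℚ) + 1 := by
      intro b hb
      rw [descL_cons, if_pos (Finset.mem_Ico.1 hb).2]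
      push_cast; ring
    rw [Finset.sum_congr rfl h1, Finset.sum_const, Nat.card_Ico]
    simp only [descL_cons, if_neg (lt_irrefl a), if_neg (by omega : ¬ a + 1 < a), gapL,
      List.headD_cons]
    have hc : ((a - rstart (a :: t) : ℕ) : ℚ) = (a : ℚ) - (rstart (a :: t) : ℚ) :=
      Nat.cast_sub hsa
    rw [nsmul_eq_mul, hc]
    push_cast
    ring
  · rw [Eq', key]
    rw [show Dq m + 2 * Eq' m = ∑ l ∈ F (m+1),
        ((descL l : ℚ) + 2 * ((descL l : ℚ) * (gapL l : ℚ))) by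
      simp only [Dq, Eq', ← Finset.sum_add_distrib, Finset.mul_sum]]
    refine Finset.sum_congr rfl fun l hl => ?_
    obtain ⟨a, t, rfl, hsa⟩ := shape l hl
    simp only [List.headD_cons]
    have h1 : ∀ b ∈ Finset.Ico (rstart (a :: t)) a,
        ((descL (b :: a :: t) : ℚ)) * ((gapL (b :: a :: t) : ℚ)) = 0 := by
      intro b hb
      rw [gapL_cons_down t (Finset.mem_Ico.1 hb).2]
      simp
    rw [Finset.sum_congr rfl h1, Finset.sum_const, gapL_cons_stay, gapL_cons_up a t hsa]
    simp only [descL_cons, if_neg (lt_irrefl a), if_neg (by omega : ¬ a + 1 < a)]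
    push_cast
    ring

lemma closed_forms (m : ℕ) :
    2 * Tq m = 3^m + 1 ∧ 2 * Sq m = 3^m - 1 ∧
    12 * Dq m = m * 3^m - 3*m ∧ 12 * Eq' m = m * 3^m + 3*m - 3*3^m + 3 := by
  induction m with
  | zero =>
    have h0 : gapL [0] = 0 := rfl
    have h1 : descL [0] = 0 := rfl
    norm_num [Tq, Sq, Dq, Eq', F_one, h0, h1]
  | succ m ih =>
    obtain ⟨hT, hS, hD, hE⟩ := ih
    obtain ⟨rT, rS, rD, rE⟩ := step_rec m
    refine ⟨?_, ?_, ?_, ?_⟩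
    · rw [rT, pow_succ]; linarith
    · rw [rS, pow_succ]; linarith
    · rw [rD, pow_succ]; push_cast; linarith
    · rw [rE, pow_succ]; push_cast; linarith

end FCAux

namespace FCAux

/-- decode a reversed-list word as a function. -/
def toW (l : List ℕ) : ℕ → ℕ := fun i => l.reverse.getD i 0

lemma toW_cons (b : ℕ) (l : List ℕ) (i : ℕ) :
    toW (b :: l) i = if i < l.length then toW l i else if i = l.length then b else 0 := by
  simp only [toW, List.reverse_cons]
  by_cases h : i < l.length
  · rw [List.getD_append _ _ _ _ (by simpa using h)]
    simp [h]
  · rw [List.getD_append_right _ _ _ _ (by simpa using h)]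
    rw [if_neg h]
    by_cases h2 : i = l.length
    · subst h2; simp
    · rw [if_neg h2]
      have : 1 ≤ i - l.reverse.length := by simp; omega
      exact List.getD_eq_default _ _ (by simpa using this)

lemma toW_zero_of_ge (l : List ℕ) (i : ℕ) (h : l.length ≤ i) : toW l i = 0 :=
  List.getD_eq_default _ _ (by simpa using h)

lemma toW_head (a : ℕ) (t : List ℕ) : toW (a :: t) t.length = a := by
  rw [toW_cons]; simp

lemma toW_lt (b : ℕ) (l : List ℕ) (i : ℕ) (h : i < l.length) : toW (b :: l) i = toW l i := by
  rw [toW_cons, if_pos h]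

end FCAux

namespace FCAux

lemma descL_eq_card : ∀ l : List ℕ,
    ((Finset.range (l.length - 1)).filter (fun i => toW l (i+1) < toW l i)).card = descL l := by
  intro l
  induction l with
  | nil => simp [descL]
  | cons b t ih =>
    match t, ih with
    | [], _ => simp [descL, toW]
    | a :: t', ih =>
      have hlen : (b :: a :: t').length - 1 = (t'.length + 1) := by simp
      rw [hlen, Finset.range_add_one, Finset.filter_insert]
      have hagree : ∀ i ∈ Finset.range t'.length,
          (toW (b :: a :: t') (i+1) < toW (b :: a :: t') i) =
          (toW (a :: t') (i+1) < toW (a :: t') i) := by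
        intro i hi
        have hi' := Finset.mem_range.1 hi
        rw [toW_lt b (a :: t') (i+1) (by simp; omega), toW_lt b (a :: t') i (by simp; omega)]
      have hfilter : (Finset.range t'.length).filter
            (fun i => toW (b :: a :: t') (i+1) < toW (b :: a :: t') i)
          = (Finset.range t'.length).filter (fun i => toW (a :: t') (i+1) < toW (a :: t') i) := by
        apply Finset.filter_congr
        intro i hi
        simp only [hagree i hi]
      have hcard : ((Finset.range t'.length).filter
          (fun i => toW (b :: a :: t') (i+1) < toW (b :: a :: t') i)).card = descL (a :: t') := by
        rw [hfilter]
        simpa using ih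
      have hcond : (toW (b :: a :: t') (t'.length + 1) < toW (b :: a :: t') t'.length) ↔ b < a := by
        have h1 : toW (b :: a :: t') (t'.length + 1) = b := by
          have := toW_head b (a :: t'); simpa using this
        have h2 : toW (b :: a :: t') t'.length = a := by
          rw [toW_lt _ _ _ (by simp), toW_head]
        rw [h1, h2]
      rw [descL_cons]
      by_cases hba : b < a
      · rw [if_pos (hcond.2 hba), if_pos hba, Finset.card_insert_of_notMem (by simp), hcard]
        omega
      · rw [if_neg (fun h => hba (hcond.1 h)), if_neg hba, hcard]
        omega

lemma wruns_toW (l : List ℕ) (n : ℕ) (h : l.length = n) :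
    wruns n (toW l) = 1 + descL l := by
  rw [wruns]
  congr 1
  have hset : {i : ℕ | i + 1 < n ∧ toW l (i+1) < toW l i} =
      ↑((Finset.range (n-1)).filter (fun i => toW l (i+1) < toW l i)) := by
    ext i
    simp only [Set.mem_setOf_eq, Finset.coe_filter, Finset.mem_range]
    constructor
    · rintro ⟨h1, h2⟩; exact ⟨by omega, h2⟩
    · rintro ⟨h1, h2⟩; exact ⟨by omega, h2⟩
  rw [hset, Set.ncard_coe_finset, ← h, descL_eq_card]

end FCAux

namespace FCAux

lemma toW_F_one (i : ℕ) : toW [0] i = 0 := by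
  cases i <;> simp [toW]

lemma headD_eq_toW (l : List ℕ) (h : l ≠ []) : l.headD 0 = toW l (l.length - 1) := by
  obtain ⟨a, t, rfl⟩ := List.exists_cons_of_ne_nil h
  simp [toW_head]

lemma inv : ∀ n, 1 ≤ n → ∀ l ∈ F n,
    IsCatalanWord n (toW l) ∧ IsFlattened n (toW l) ∧
    (∀ i, IsRunStart n (toW l) i → toW l i ≤ rstart l) ∧
    (∃ i, IsRunStart n (toW l) i ∧ toW l i = rstart l) := by
  intro n
  induction n using Nat.strong_induction_on with
  | _ n ihn =>
    match n with
    | 0 => omega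
    | 1 =>
      intro _ l hl
      simp only [F, Finset.mem_singleton] at hl
      subst hl
      refine ⟨⟨toW_F_one 0, fun i hi => by omega, fun i _ => toW_F_one i⟩,
        fun i j _ _ _ => by rw [toW_F_one, toW_F_one], fun i _ => by rw [toW_F_one]; simp [rstart],
        ⟨0, ⟨by omega, Or.inl rfl⟩, by rw [toW_F_one]; simp [rstart]⟩⟩
    | (m+2) =>
      intro _ l' hl'
      obtain ⟨t, ht, b, hb, rfl⟩ := mem_F_succ.1 hl'
      obtain ⟨hCat, hFlat, hle, i0, hi0, hi0v⟩ := ihn (m+1) (by omega) (by omega) t ht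
      have htlen : t.length = m + 1 := length_of_mem_F _ _ ht
      obtain ⟨a, t', rfl⟩ := List.exists_cons_of_ne_nil (ne_nil_of_mem_F (by omega) ht)
      set w : ℕ → ℕ := toW (a :: t') with hw
      set w' : ℕ → ℕ := toW (b :: a :: t') with hw'
      have ht'len : t'.length = m := by simpa using htlen
      -- agreement and boundary values
      have hag : ∀ i, i < m + 1 → w' i = w i := by
        intro i hi
        exact toW_lt b (a :: t') i (by simp [ht'len]; omega)
      have hwm1 : w' (m+1) = b := by
        have := toW_head b (a :: t'); rw [← hw'] at this; simpa [ht'len] using this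
      have hwm : w m = a := by
        have := toW_head a t'; rw [ht'len] at this; exact this
      have hs : rstart (a :: t') ≤ a := by simpa using rstart_le_headD _ _ ht
      have hbcase : b = a ∨ b = a + 1 ∨ (rstart (a :: t') ≤ b ∧ b < a) := by
        simpa using mem_allowed.1 hb
      have hble : b ≤ a + 1 := by rcases hbcase with h | h | h <;> omega
      -- run-start transfer
      have hRS : ∀ j, j < m + 1 → (IsRunStart (m+2) w' j ↔ IsRunStart (m+1) w j) := by
        intro j hj
        unfold IsRunStart
        constructor
        · rintro ⟨_, h2⟩
          refine ⟨hj, ?_⟩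
          rcases h2 with h2 | h2
          · exact Or.inl h2
          · right; rw [← hag j hj, ← hag (j-1) (by omega)]; exact h2
        · rintro ⟨_, h2⟩
          refine ⟨by omega, ?_⟩
          rcases h2 with h2 | h2
          · exact Or.inl h2
          · right; rw [hag j hj, hag (j-1) (by omega)]; exact h2
      have hRStop : IsRunStart (m+2) w' (m+1) ↔ b < a := by
        unfold IsRunStart
        constructor
        · rintro ⟨_, h2⟩
          rcases h2 with h2 | h2
          · omega
          · rw [hwm1] at h2; rw [show m + 1 - 1 = m from rfl, hag m (by omega), hwm] at h2
            exact h2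
        · intro hba
          refine ⟨by omega, Or.inr ?_⟩
          rw [hwm1, show m + 1 - 1 = m from rfl, hag m (by omega), hwm]
          exact hba
      -- Catalan
      have hCat' : IsCatalanWord (m+2) w' := by
        refine ⟨?_, ?_, ?_⟩
        · rw [hag 0 (by omega)]; exact hCat.1
        · intro i hi
          by_cases h : i + 1 < m + 1
          · rw [hag (i+1) h, hag i (by omega)]
            exact hCat.2.1 i h
          · have hieq : i = m := by omega
            rw [hieq, hwm1, hag m (by omega), hwm]
            exact hble
        · intro i hi
          exact toW_zero_of_ge _ _ (by simp [ht'len]; omega)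
      -- bound on run-start values
      have hle' : ∀ i, IsRunStart (m+2) w' i → w' i ≤ rstart (b :: a :: t') := by
        intro i hi
        rw [rstart_cons]
        by_cases hab : a ≤ b
        · rw [if_pos hab]
          by_cases him : i < m + 1
          · rw [hag i him]
            exact hle i ((hRS i him).1 hi)
          · have : i = m + 1 := by
              have := hi.1; omega
            subst this
            exact absurd (hRStop.1 hi) (by omega)
        · rw [if_neg hab]
          by_cases him : i < m + 1
          · rw [hag i him]
            have h3 : rstart (a :: t') ≤ b := by
              rcases hbcase with h | h | h <;> omega
            exact le_trans (hle i ((hRS i him).1 hi)) h3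
          · have : i = m + 1 := by have := hi.1; omega
            subst this
            rw [hwm1]
      -- flattened
      have hFlat' : IsFlattened (m+2) w' := by
        intro i j hi hj hij
        by_cases hjm : j < m + 1
        · have him : i < m + 1 := by omega
          rw [hag i him, hag j hjm]
          exact hFlat i j ((hRS i him).1 hi) ((hRS j hjm).1 hj) hij
        · have hjeq : j = m + 1 := by have := hj.1; omega
          subst hjeq
          by_cases him : i < m + 1
          · have hba : b < a := hRStop.1 hj
            have h3 : rstart (a :: t') ≤ b := by
              rcases hbcase with h | h | h <;> omega
            rw [hag i him, hwm1]
            exact le_trans (hle i ((hRS i him).1 hi)) h3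
          · have : i = m + 1 := by have := hi.1; omega
            subst this
            exact le_refl _
      refine ⟨hCat', hFlat', hle', ?_⟩
      -- existence of run start attaining rstart
      rw [rstart_cons]
      by_cases hab : a ≤ b
      · rw [if_pos hab]
        exact ⟨i0, (hRS i0 hi0.1).2 hi0, by rw [hag i0 hi0.1]; exact hi0v⟩
      · rw [if_neg hab]
        exact ⟨m+1, hRStop.2 (by omega), hwm1⟩

end FCAux

namespace FCAux

/-- encode a (length `n`) word as a reversed list. -/
def ofW (n : ℕ) (w : ℕ → ℕ) : List ℕ := (List.ofFn (fun i : Fin n => w i)).reverse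

lemma length_ofW (n : ℕ) (w : ℕ → ℕ) : (ofW n w).length = n := by
  simp [ofW]

lemma toW_ofW (n : ℕ) (w : ℕ → ℕ) (h0 : ∀ i, n ≤ i → w i = 0) : toW (ofW n w) = w := by
  funext i
  rw [toW, ofW, List.reverse_reverse]
  by_cases hi : i < n
  · rw [List.getD_eq_getElem _ _ (by simpa using hi)]
    simp
  · rw [List.getD_eq_default _ _ (by simpa using not_lt.1 hi)]
    exact (h0 i (not_lt.1 hi)).symm

lemma ofW_toW (n : ℕ) (l : List ℕ) (h : l.length = n) : ofW n (toW l) = l := by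
  have : List.ofFn (fun i : Fin n => toW l i) = l.reverse := by
    apply List.ext_getElem
    · simp [h]
    · intro i h1 h2
      simp only [List.getElem_ofFn]
      rw [toW, List.getD_eq_getElem _ _ h2]
  rw [ofW, this, List.reverse_reverse]

lemma ofW_succ (n : ℕ) (w : ℕ → ℕ) :
    ofW (n+1) w = w n :: ofW n (fun i => if i < n then w i else 0) := by
  have hfun : (fun i : Fin n => w i.castSucc) =
      (fun i : Fin n => if (i : ℕ) < n then w i else 0) := by
    funext i
    simp [i.isLt]
  unfold ofW
  rw [List.ofFn_succ']
  simp only [List.concat_eq_append, List.reverse_append, List.reverse_cons, List.reverse_nil,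
    List.nil_append, List.cons_append, Fin.val_last]
  congr 2
  rw [hfun]

/-- truncation of a flattened Catalan word. -/
lemma trunc_mem_s6 (n : ℕ) (hn : 1 ≤ n) (w : ℕ → ℕ) (hw : w ∈ FlatCat (n+1)) :
    (fun i => if i < n then w i else 0) ∈ FlatCat n := by
  obtain ⟨⟨h0, hstep, _⟩, hflat⟩ := hw
  set v : ℕ → ℕ := fun i => if i < n then w i else 0 with hv
  have hag : ∀ i, i < n → v i = w i := fun i hi => by simp [hv, hi]
  have hRS : ∀ j, j < n → (IsRunStart n v j ↔ IsRunStart (n+1) w j) := by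
    intro j hj
    unfold IsRunStart
    constructor
    · rintro ⟨_, h2⟩
      refine ⟨by omega, ?_⟩
      rcases h2 with h2 | h2
      · exact Or.inl h2
      · right; rw [← hag j hj, ← hag (j-1) (by omega)]; exact h2
    · rintro ⟨_, h2⟩
      refine ⟨hj, ?_⟩
      rcases h2 with h2 | h2
      · exact Or.inl h2
      · right; rw [hag j hj, hag (j-1) (by omega)]; exact h2
  refine ⟨⟨by rw [hag 0 hn]; exact h0, ?_, fun i hi => by simp [hv]; omega⟩, ?_⟩
  · intro i hi
    rw [hag (i+1) hi, hag i (by omega)]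
    exact hstep i (by omega)
  · intro i j hi hj hij
    rw [hag i hi.1, hag j hj.1]
    exact hflat i j ((hRS i hi.1).1 hi) ((hRS j hj.1).1 hj) hij

lemma mem_F_of_flatcat : ∀ n, 1 ≤ n → ∀ w ∈ FlatCat n, ofW n w ∈ F n := by
  intro n
  induction n using Nat.strong_induction_on with
  | _ n ihn =>
    match n with
    | 0 => omega
    | 1 =>
      intro _ w hw
      have h0 : w 0 = 0 := hw.1.1
      have : ofW 1 w = [0] := by
        simp [ofW, List.ofFn_succ, h0]
      rw [this]
      simp [F]
    | (m+2) =>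
      intro _ w hw
      set v : ℕ → ℕ := fun i => if i < m + 1 then w i else 0 with hv
      have hvmem : v ∈ FlatCat (m+1) := trunc_mem_s6 (m+1) (by omega) w hw
      have htF : ofW (m+1) v ∈ F (m+1) := ihn (m+1) (by omega) (by omega) v hvmem
      set t : List ℕ := ofW (m+1) v with htdef
      have htlen : t.length = m + 1 := length_ofW _ _
      have htoW : toW t = v := toW_ofW (m+1) v (fun i hi => by simp [hv]; omega)
      have hsplit : ofW (m+2) w = w (m+1) :: t := ofW_succ (m+1) w
      rw [hsplit]
      apply mem_F_succ.2
      refine ⟨t, htF, w (m+1), ?_, rfl⟩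
      -- show w (m+1) ∈ allowed t
      obtain ⟨_, hFlat, hle, i0, hi0, hi0v⟩ := inv (m+1) (by omega) t htF
      rw [htoW] at hle hi0 hi0v
      have hhead : t.headD 0 = w m := by
        rw [headD_eq_toW t (by intro h; rw [h] at htlen; simp at htlen), htoW, htlen]
        simp [hv]
      have hble : w (m+1) ≤ w m + 1 := hw.1.2.1 m (by omega)
      rw [mem_allowed, hhead]
      by_cases hcmp : w m ≤ w (m+1)
      · have : w (m+1) = w m ∨ w (m+1) = w m + 1 := by omega
        tauto
      · right; right
        push_neg at hcmp
        refine ⟨?_, hcmp⟩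
        -- m+1 is a run start of w; use flattenedness
        have hrs1 : IsRunStart (m+2) w (m+1) := by
          refine ⟨by omega, Or.inr ?_⟩
          simpa using hcmp
        have hi0lt : i0 < m + 1 := hi0.1
        have hrs0 : IsRunStart (m+2) w i0 := by
          obtain ⟨h1, h2⟩ := hi0
          refine ⟨by omega, ?_⟩
          rcases h2 with h2 | h2
          · exact Or.inl h2
          · right
            have e1 : v i0 = w i0 := by simp only [hv]; rw [if_pos hi0lt]
            have e2 : v (i0-1) = w (i0-1) := by simp only [hv]; rw [if_pos (by omega)]
            rw [← e1, ← e2]; exact h2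
        have hres := hw.2 i0 (m+1) hrs0 hrs1 (by omega)
        have e1 : v i0 = w i0 := by simp only [hv]; rw [if_pos hi0lt]
        rw [← hi0v, e1]
        exact hres
    
end FCAux

namespace FCAux

lemma flatcat_eq (n : ℕ) (hn : 1 ≤ n) : FlatCat n = toW '' ↑(F n) := by
  ext w
  simp only [Set.mem_image, Finset.mem_coe]
  constructor
  · intro hw
    refine ⟨ofW n w, mem_F_of_flatcat n hn w hw, ?_⟩
    exact toW_ofW n w hw.1.2.2
  · rintro ⟨l, hl, rfl⟩
    obtain ⟨hCat, hFlat, _, _⟩ := inv n hn l hl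
    exact ⟨hCat, hFlat⟩

lemma toW_injOn (n : ℕ) : Set.InjOn toW ↑(F n) := by
  intro l₁ h₁ l₂ h₂ h
  rw [← ofW_toW n l₁ (length_of_mem_F n l₁ h₁), ← ofW_toW n l₂ (length_of_mem_F n l₂ h₂), h]

lemma total_wruns (n : ℕ) (hn : 1 ≤ n) :
    (∑ᶠ w ∈ FlatCat n, wruns n w) = ∑ l ∈ F n, (1 + descL l) := by
  rw [flatcat_eq n hn, finsum_mem_image (toW_injOn n), finsum_mem_coe_finset]
  exact Finset.sum_congr rfl fun l hl => wruns_toW l n (length_of_mem_F n l hl)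

end FCAux

/-- For every `n ≥ 1`, the total number of runs of weak ascents over all
flattened Catalan words of length `n` equals `(27 - 9n + (5 + n)·3^n)/36`. -/
theorem flatCat_total_wruns (n : ℕ) (hn : 1 ≤ n) :
    ((∑ᶠ w ∈ FlatCat n, wruns n w : ℕ) : ℚ) =
      (27 - 9 * (n : ℚ) + (5 + (n : ℚ)) * 3 ^ n) / 36 := by
  obtain ⟨m, rfl⟩ : ∃ m, n = m + 1 := ⟨n - 1, by omega⟩
  rw [FCAux.total_wruns (m+1) hn]
  have hcast : ((∑ l ∈ FCAux.F (m+1), (1 + FCAux.descL l) : ℕ) : ℚ)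
      = FCAux.Tq m + FCAux.Dq m := by
    rw [Nat.cast_sum, FCAux.Tq, FCAux.Dq, ← Finset.sum_add_distrib]
    exact Finset.sum_congr rfl fun l _ => by push_cast; ring
  rw [hcast]
  obtain ⟨hT, -, hD, -⟩ := FCAux.closed_forms m
  rw [eq_div_iff (by norm_num : (36:ℚ) ≠ 0)]
  push_cast
  linear_combination 18 * hT + 3 * hD
end
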